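/- arXiv:2112.10142 — 7 statements merged into one kernel-verified Lean document; each statement's English description precedes it below -/
import Mathlib

section
/- Let v be a value function and w⁻, w⁺ weighting functions. If η, ξ : Ω → ℝ are random variables with η(ω) ≤ ξ(ω) for every ω ∈ Ω, and both CPT distorted expectations E_{w⁻w⁺}[v(η)] and E_{w⁻w⁺}[v(ξ)] are well defined (all integrals finite), then E_{w⁻w⁺}[v(η)] ≤ E_{w⁻w⁺}[v(ξ)]. -/
open MeasureTheory Set

noncomputable section

/-- A value function: strictly increasing `v : ℝ → ℝ` with `v 0 = 0`. -/
def IsValueFun (v : ℝ → ℝ) : Prop := StrictMono v ∧ v 0 = 0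

/-- A weighting function: a strictly increasing `w : [0,1] → [0,1]`
with `w 0 = 0` and `w 1 = 1`. -/
def IsWeightFun (w : ℝ → ℝ) : Prop :=
  StrictMonoOn w (Icc 0 1) ∧ MapsTo w (Icc 0 1) (Icc 0 1) ∧ w 0 = 0 ∧ w 1 = 1

/-- The CPT distorted expectation
`E_{w⁻w⁺}[v(ζ)] = ∫₀^∞ w⁺(ℙ(v(ζ) ≥ t)) dt − ∫₀^∞ w⁻(ℙ(v(ζ) ≤ −t)) dt`. -/
def cptE {Ω : Type*} [MeasurableSpace Ω] (P : Measure Ω)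
    (v wm wp : ℝ → ℝ) (ζ : Ω → ℝ) : ℝ :=
  (∫ t in Ioi (0:ℝ), wp (P {ω | t ≤ v (ζ ω)}).toReal)
    - ∫ t in Ioi (0:ℝ), wm (P {ω | v (ζ ω) ≤ -t}).toReal

/-- Both integrals defining the CPT distorted expectation are finite. -/
def CptWellDef {Ω : Type*} [MeasurableSpace Ω] (P : Measure Ω)
    (v wm wp : ℝ → ℝ) (ζ : Ω → ℝ) : Prop :=
  IntegrableOn (fun t => wp (P {ω | t ≤ v (ζ ω)}).toReal) (Ioi 0) ∧
    IntegrableOn (fun t => wm (P {ω | v (ζ ω) ≤ -t}).toReal) (Ioi 0)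

/-- The generalized shortfall risk measure (GSR-CPT):
`ρ_{(v,w⁻,w⁺)}(ξ) = inf { x : E_{w⁻w⁺}[v(ξ − x)] ≤ 0 }`, with `inf ∅ = +∞`. -/
def gsr {Ω : Type*} [MeasurableSpace Ω] (P : Measure Ω)
    (v wm wp : ℝ → ℝ) (ξ : Ω → ℝ) : EReal :=
  sInf ((fun x : ℝ => (x : EReal)) ''
    {x : ℝ | cptE P v wm wp (fun ω => ξ ω - x) ≤ 0})

/-- A bounded random variable. -/
def IsBddRV {Ω : Type*} [MeasurableSpace Ω] (ξ : Ω → ℝ) : Prop :=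
  Measurable ξ ∧ ∃ M : ℝ, ∀ ω, |ξ ω| ≤ M

/-- A weighting function which is continuously differentiable on `[0,1]`
with strictly positive derivative. -/
def SmoothWeight (w : ℝ → ℝ) : Prop :=
  IsWeightFun w ∧ ContDiffOn ℝ 1 w (Icc 0 1) ∧
    ∀ p ∈ Icc (0:ℝ) 1, 0 < derivWithin w (Icc 0 1) p

/-- monotonicity of the CPT distorted expectation: if `η ≤ ξ`
pointwise and both distorted expectations are well defined, then
`E_{w⁻w⁺}[v(η)] ≤ E_{w⁻w⁺}[v(ξ)]`. -/
theorem cptE_mono {Ω : Type*} [MeasurableSpace Ω] (P : Measure Ω)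
    [IsProbabilityMeasure P]
    (v wm wp : ℝ → ℝ) (hv : IsValueFun v) (hwm : IsWeightFun wm)
    (hwp : IsWeightFun wp)
    (η ξ : Ω → ℝ) (hη : Measurable η) (hξ : Measurable ξ)
    (hle : ∀ ω, η ω ≤ ξ ω)
    (hwdη : CptWellDef P v wm wp η) (hwdξ : CptWellDef P v wm wp ξ) :
    cptE P v wm wp η ≤ cptE P v wm wp ξ := by
  have key : ∀ (w : ℝ → ℝ), IsWeightFun w → ∀ (A B : Set Ω), A ⊆ B →
      w (P A).toReal ≤ w (P B).toReal := by
    intro w hw A B hAB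
    have hmem : ∀ (C : Set Ω), (P C).toReal ∈ Icc (0:ℝ) 1 := by
      intro C
      constructor
      · exact ENNReal.toReal_nonneg
      · have := prob_le_one (μ := P) (s := C)
        simpa using ENNReal.toReal_le_of_le_ofReal zero_le_one (by simpa using this)
    refine hw.1.monotoneOn (hmem A) (hmem B) ?_
    exact ENNReal.toReal_mono (measure_ne_top P B) (measure_mono hAB)
  unfold cptE
  have h1 : (∫ t in Ioi (0:ℝ), wp (P {ω | t ≤ v (η ω)}).toReal)
      ≤ ∫ t in Ioi (0:ℝ), wp (P {ω | t ≤ v (ξ ω)}).toReal := by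
    refine setIntegral_mono hwdη.1 hwdξ.1 fun t => ?_
    exact key wp hwp _ _ fun ω h => h.trans (hv.1.le_iff_le.mpr (hle ω))
  have h2 : (∫ t in Ioi (0:ℝ), wm (P {ω | v (ξ ω) ≤ -t}).toReal)
      ≤ ∫ t in Ioi (0:ℝ), wm (P {ω | v (η ω) ≤ -t}).toReal := by
    refine setIntegral_mono hwdξ.2 hwdη.2 fun t => ?_
    exact key wm hwm _ _ fun ω h => le_trans (hv.1.le_iff_le.mpr (hle ω)) h
  linarith
end
end

section
/- Let v be a value function, w⁻, w⁺ weighting functions, ξ a random variable and a, b ∈ ℝ with a ≤ b, such that E_{w⁻w⁺}[v(ξ − a)] and E_{w⁻w⁺}[v(ξ − b)] are well defined. Then E_{w⁻w⁺}[v(ξ − a)] ≥ E_{w⁻w⁺}[v(ξ − b)]. -/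
open MeasureTheory Set

noncomputable section

/-- for `a ≤ b`, `E_{w⁻w⁺}[v(ξ − a)] ≥ E_{w⁻w⁺}[v(ξ − b)]`
whenever both are well defined. -/
theorem cptE_antitone_shift {Ω : Type*} [MeasurableSpace Ω] (P : Measure Ω)
    [IsProbabilityMeasure P]
    (v wm wp : ℝ → ℝ) (hv : IsValueFun v) (hwm : IsWeightFun wm)
    (hwp : IsWeightFun wp)
    (ξ : Ω → ℝ) (hξ : Measurable ξ) (a b : ℝ) (hab : a ≤ b)
    (hwda : CptWellDef P v wm wp (fun ω => ξ ω - a))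
    (hwdb : CptWellDef P v wm wp (fun ω => ξ ω - b)) :
    cptE P v wm wp (fun ω => ξ ω - b) ≤ cptE P v wm wp (fun ω => ξ ω - a) := by
  have hmem : ∀ (s : Set Ω), (P s).toReal ∈ Icc (0:ℝ) 1 := fun s =>
    ⟨ENNReal.toReal_nonneg, by
      have := prob_le_one (μ := P) (s := s)
      simpa using ENNReal.toReal_mono (by simp) this⟩
  have hle : ∀ ω, v (ξ ω - b) ≤ v (ξ ω - a) :=
    fun ω => hv.1.monotone (by linarith)
  have key1 : ∀ t ∈ Ioi (0:ℝ),
      wp (P {ω | t ≤ v (ξ ω - b)}).toReal ≤ wp (P {ω | t ≤ v (ξ ω - a)}).toReal := by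
    intro t _
    apply hwp.1.monotoneOn (hmem _) (hmem _)
    apply ENNReal.toReal_mono (by simp)
    exact measure_mono (fun ω hω => le_trans hω (hle ω))
  have key2 : ∀ t ∈ Ioi (0:ℝ),
      wm (P {ω | v (ξ ω - a) ≤ -t}).toReal ≤ wm (P {ω | v (ξ ω - b) ≤ -t}).toReal := by
    intro t _
    apply hwm.1.monotoneOn (hmem _) (hmem _)
    apply ENNReal.toReal_mono (by simp)
    exact measure_mono (fun ω hω => le_trans (hle ω) hω)
  unfold cptE
  apply sub_le_sub
  · exact setIntegral_mono_on hwdb.1 hwda.1 measurableSet_Ioi key1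
  · exact setIntegral_mono_on hwda.2 hwdb.2 measurableSet_Ioi key2
end
end

section
/- Let v be a value function and let the weighting functions w⁻, w⁺ be continuously differentiable on [0,1] with strictly positive derivatives. Then for every random variable ξ and all real numbers a < b such that E_{w⁻w⁺}[v(ξ − a)] and E_{w⁻w⁺}[v(ξ − b)] are well defined, the strict inequality E_{w⁻w⁺}[v(ξ − a)] > E_{w⁻w⁺}[v(ξ − b)] holds. -/
open MeasureTheory Set

noncomputable section

/-! Write `X = v(ξ - b)` and `Y = v(ξ - a)`, so that `X < Y` pointwise. Monotonicity of the
weights makes each of the two integrals defining `E_{w⁻w⁺}` compare the right way, so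
`E_{w⁻w⁺}[X] ≤ E_{w⁻w⁺}[Y]`. If equality held, strict monotonicity of the weights would force
`ℙ(X ≥ t) = ℙ(Y ≥ t)` and `ℙ(X ≤ -t) = ℙ(Y ≤ -t)` for a.e. `t > 0`. By Tonelli,
`∫_{t > 0} ℙ(X < t ≤ Y) dt = E[(Y - X⁺)⁺]`, so the first family of equalities gives `Y ≤ X⁺` a.s.
and, applied to `-Y ≤ -X`, the second gives `-X ≤ (-Y)⁺` a.s.; together they contradict
`X < Y`. -/

section

variable {Ω : Type*} [MeasurableSpace Ω] {P : Measure Ω}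

theorem lintegral_Ioi_measure_lt_le [SFinite P] {X Y : Ω → ℝ} (hX : Measurable X)
    (hY : Measurable Y) :
    ∫⁻ t in Ioi (0:ℝ), P {ω | X ω < t ∧ t ≤ Y ω} =
      ∫⁻ ω, ENNReal.ofReal (Y ω - max (X ω) 0) ∂P := by
  have hs : MeasurableSet {p : ℝ × Ω | X p.2 < p.1 ∧ p.1 ≤ Y p.2} :=
    (measurableSet_lt (hX.comp measurable_snd) measurable_fst).inter
      (measurableSet_le measurable_fst (hY.comp measurable_snd))
  calc ∫⁻ t in Ioi (0:ℝ), P {ω | X ω < t ∧ t ≤ Y ω}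
      = ((volume.restrict (Ioi (0:ℝ))).prod P) {p | X p.2 < p.1 ∧ p.1 ≤ Y p.2} :=
        (Measure.prod_apply hs).symm
    _ = ∫⁻ ω, volume.restrict (Ioi (0:ℝ)) (Ioc (X ω) (Y ω)) ∂P := Measure.prod_apply_symm hs
    _ = ∫⁻ ω, ENNReal.ofReal (Y ω - max (X ω) 0) ∂P := by
        refine lintegral_congr fun ω => ?_
        rw [Measure.restrict_apply measurableSet_Ioc, Ioc_inter_Ioi, Real.volume_Ioc]

theorem ae_le_max_zero_of_ae_measure_eq [IsFiniteMeasure P] {X Y : Ω → ℝ} (hX : Measurable X)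
    (hY : Measurable Y) (hXY : ∀ ω, X ω ≤ Y ω)
    (h : ∀ᵐ t ∂volume.restrict (Ioi (0:ℝ)), P {ω | t ≤ X ω} = P {ω | t ≤ Y ω}) :
    ∀ᵐ ω ∂P, Y ω ≤ max (X ω) 0 := by
  have hnull : ∫⁻ ω, ENNReal.ofReal (Y ω - max (X ω) 0) ∂P = 0 := by
    rw [← lintegral_Ioi_measure_lt_le hX hY, ← lintegral_zero]
    refine lintegral_congr_ae (h.mono fun t ht => ?_)
    dsimp only
    have hdiff : {ω | X ω < t ∧ t ≤ Y ω} = {ω | t ≤ Y ω} \ {ω | t ≤ X ω} := by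
      ext ω
      simp [and_comm]
    have hsub : {ω | t ≤ X ω} ⊆ {ω | t ≤ Y ω} := fun ω (hω : t ≤ X ω) => hω.trans (hXY ω)
    rw [hdiff, measure_sdiff hsub (measurableSet_le measurable_const hX).nullMeasurableSet
      (measure_ne_top _ _), ht, tsub_self]
  have hmeas : Measurable fun ω => ENNReal.ofReal (Y ω - max (X ω) 0) :=
    (hY.sub (hX.max measurable_const)).ennreal_ofReal
  filter_upwards [(lintegral_eq_zero_iff hmeas).1 hnull] with ω hω
  linarith [ENNReal.ofReal_eq_zero.1 hω]

end

section

variable {Ω α : Type*} [MeasurableSpace Ω] [MeasurableSpace α] {P : Measure Ω}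
  [IsProbabilityMeasure P] {μ : Measure α} {w : ℝ → ℝ} {A B : α → Set Ω}

theorem toReal_measure_mem_Icc (s : Set Ω) : (P s).toReal ∈ Icc (0:ℝ) 1 :=
  ⟨measureReal_nonneg, measureReal_le_one⟩

theorem integral_weight_measure_mono (hw : MonotoneOn w (Icc 0 1)) (hAB : ∀ t, A t ⊆ B t)
    (hA : Integrable (fun t => w (P (A t)).toReal) μ)
    (hB : Integrable (fun t => w (P (B t)).toReal) μ) :
    ∫ t, w (P (A t)).toReal ∂μ ≤ ∫ t, w (P (B t)).toReal ∂μ :=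
  integral_mono hA hB fun t => hw (toReal_measure_mem_Icc _) (toReal_measure_mem_Icc _)
    (measureReal_mono (hAB t))

theorem ae_measure_eq_of_integral_weight_eq (hw : StrictMonoOn w (Icc 0 1))
    (hAB : ∀ t, A t ⊆ B t) (hA : Integrable (fun t => w (P (A t)).toReal) μ)
    (hB : Integrable (fun t => w (P (B t)).toReal) μ)
    (h : ∫ t, w (P (A t)).toReal ∂μ = ∫ t, w (P (B t)).toReal ∂μ) :
    ∀ᵐ t ∂μ, P (A t) = P (B t) := by
  have hle : ∀ᵐ t ∂μ, w (P (A t)).toReal ≤ w (P (B t)).toReal := ae_of_all _ fun t =>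
    hw.monotoneOn (toReal_measure_mem_Icc _) (toReal_measure_mem_Icc _)
      (measureReal_mono (hAB t))
  filter_upwards [(integral_eq_iff_of_ae_le hA hB hle).1 h] with t ht
  exact (ENNReal.toReal_eq_toReal_iff' (measure_ne_top _ _) (measure_ne_top _ _)).1
    (hw.injOn (toReal_measure_mem_Icc _) (toReal_measure_mem_Icc _) ht)

end

theorem cptE_lt_cptE_of_lt {Ω : Type*} [MeasurableSpace Ω] {P : Measure Ω}
    [IsProbabilityMeasure P] {v wm wp : ℝ → ℝ} (hwm : StrictMonoOn wm (Icc 0 1))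
    (hwp : StrictMonoOn wp (Icc 0 1)) {ζ₁ ζ₂ : Ω → ℝ} (h₁ : Measurable fun ω => v (ζ₁ ω))
    (h₂ : Measurable fun ω => v (ζ₂ ω)) (hlt : ∀ ω, v (ζ₁ ω) < v (ζ₂ ω))
    (hwd₁ : CptWellDef P v wm wp ζ₁) (hwd₂ : CptWellDef P v wm wp ζ₂) :
    cptE P v wm wp ζ₁ < cptE P v wm wp ζ₂ := by
  have hpos_sub : ∀ t : ℝ, {ω | t ≤ v (ζ₁ ω)} ⊆ {ω | t ≤ v (ζ₂ ω)} :=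
    fun t ω (hω : t ≤ v (ζ₁ ω)) => hω.trans (hlt ω).le
  have hneg_sub : ∀ t : ℝ, {ω | v (ζ₂ ω) ≤ -t} ⊆ {ω | v (ζ₁ ω) ≤ -t} :=
    fun t ω (hω : v (ζ₂ ω) ≤ -t) => (hlt ω).le.trans hω
  have hpos_le := integral_weight_measure_mono hwp.monotoneOn hpos_sub hwd₁.1 hwd₂.1
  have hneg_le := integral_weight_measure_mono hwm.monotoneOn hneg_sub hwd₂.2 hwd₁.2
  unfold cptE
  by_contra! hge
  have hpos := ae_measure_eq_of_integral_weight_eq hwp hpos_sub hwd₁.1 hwd₂.1 (by linarith)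
  have hneg := ae_measure_eq_of_integral_weight_eq hwm hneg_sub hwd₂.2 hwd₁.2 (by linarith)
  replace hneg := hneg.mono fun t ht => by simpa only [← le_neg (a := t)] using ht
  have hY_le := ae_le_max_zero_of_ae_measure_eq h₁ h₂ (fun ω => (hlt ω).le) hpos
  have hnegX_le := ae_le_max_zero_of_ae_measure_eq (X := fun ω => -v (ζ₂ ω)) (Y := fun ω => -v (ζ₁ ω))
    h₂.neg h₁.neg (fun ω => neg_le_neg (hlt ω).le) hneg
  obtain ⟨ω, hYω, hXω⟩ := (hY_le.and hnegX_le).exists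
  rw [le_max_iff] at hYω hXω
  rcases hYω with hYω | hYω <;> rcases hXω with hXω | hXω <;> linarith [hlt ω]

/-- if the weighting functions are continuously differentiable on
`[0,1]` with strictly positive derivatives, then for `a < b`,
`E_{w⁻w⁺}[v(ξ − a)] > E_{w⁻w⁺}[v(ξ − b)]` whenever both are well defined. -/
theorem cptE_strict_antitone_shift {Ω : Type*} [MeasurableSpace Ω] (P : Measure Ω)
    [IsProbabilityMeasure P]
    (v wm wp : ℝ → ℝ) (hv : IsValueFun v) (hwm : SmoothWeight wm)
    (hwp : SmoothWeight wp)
    (ξ : Ω → ℝ) (hξ : Measurable ξ) (a b : ℝ) (hab : a < b)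
    (hwda : CptWellDef P v wm wp (fun ω => ξ ω - a))
    (hwdb : CptWellDef P v wm wp (fun ω => ξ ω - b)) :
    cptE P v wm wp (fun ω => ξ ω - b) < cptE P v wm wp (fun ω => ξ ω - a) := by
  have hvm : Measurable v := hv.1.monotone.measurable
  exact cptE_lt_cptE_of_lt hwm.1.1 hwp.1.1 (hvm.comp (hξ.sub_const b))
    (hvm.comp (hξ.sub_const a)) (fun ω => hv.1 (by linarith)) hwdb hwda
end
end

section
/- Let 𝒱 be a nonempty set of value functions and 𝒲 a nonempty set of weighting functions, and let ξ be a random variable such that E_{w⁻w⁺}[v(ξ − x)] is well defined for every x ∈ ℝ and every (v, w⁻, w⁺) ∈ 𝒱 × 𝒲 × 𝒲. Define the preference robust generalized shortfall risk ρ_{𝒱×𝒲}(ξ) := inf { x ∈ ℝ : E_{w⁻w⁺}[v(ξ − x)] ≤ 0 for all (v, w⁻, w⁺) ∈ 𝒱 × 𝒲 × 𝒲 } and the worst-case generalized shortfall risk Π_{𝒱×𝒲}(ξ) := sup_{(v,w⁻,w⁺) ∈ 𝒱×𝒲×𝒲} ρ_{(v,w⁻,w⁺)}(ξ). Then ρ_{𝒱×𝒲}(ξ)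 = Π_{𝒱×𝒲}(ξ) as elements of the extended real line (with inf ∅ = +∞). -/
open MeasureTheory Set

noncomputable section

/-! Each constraint set `{x | E_{w⁻w⁺}[v(ξ - x)] ≤ 0}` is an upper set of `ℝ`, because the CPT
distorted expectation is monotone in the random variable. For upper sets `Sᵢ` a real `z` lies in
`⋂ Sᵢ` as soon as `z` exceeds every `inf Sᵢ`, so the infimum of the intersection is the supremum
of the infima. -/

lemma EReal.sInf_image_coe_biInter_eq_biSup {ι : Type*} {I : Set ι} {S : ι → Set ℝ}
    (hS : ∀ i ∈ I, IsUpperSet (S i)) :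
    sInf ((↑) '' ⋂ i ∈ I, S i : Set EReal) = ⨆ i ∈ I, sInf ((↑) '' S i : Set EReal) := by
  refine le_antisymm (EReal.le_of_forall_lt_iff_le.1 fun z hz => ?_)
    (iSup₂_le fun i hi => sInf_le_sInf (image_mono (biInter_subset_of_mem hi)))
  refine sInf_le ⟨z, mem_iInter₂.2 fun i hi => ?_, rfl⟩
  obtain ⟨_, ⟨x, hx, rfl⟩, hxz⟩ := sInf_lt_iff.1 ((le_biSup _ hi).trans_lt hz)
  exact hS i hi (EReal.coe_lt_coe_iff.1 hxz).le hx

section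

variable {Ω : Type*} [MeasurableSpace Ω] (P : Measure Ω) [IsProbabilityMeasure P]

lemma cptE_mono_s3 {v wm wp : ℝ → ℝ} (hv : IsValueFun v) (hwm : IsWeightFun wm)
    (hwp : IsWeightFun wp) {ζ ζ' : Ω → ℝ} (hζ : ζ ≤ ζ')
    (h : CptWellDef P v wm wp ζ) (h' : CptWellDef P v wm wp ζ') :
    cptE P v wm wp ζ ≤ cptE P v wm wp ζ' := by
  have hmem (s : Set Ω) : (P s).toReal ∈ Icc (0 : ℝ) 1 :=
    ⟨measureReal_nonneg, measureReal_le_one⟩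
  apply sub_le_sub
  · refine setIntegral_mono_on h.1 h'.1 measurableSet_Ioi fun t _ => ?_
    refine hwp.1.monotoneOn (hmem _) (hmem _) (measureReal_mono fun ω hω => ?_)
    exact le_trans hω (hv.1.monotone (hζ ω))
  · refine setIntegral_mono_on h'.2 h.2 measurableSet_Ioi fun t _ => ?_
    refine hwm.1.monotoneOn (hmem _) (hmem _) (measureReal_mono fun ω hω => ?_)
    exact le_trans (hv.1.monotone (hζ ω)) hω

lemma isUpperSet_setOf_cptE_sub_nonpos {v wm wp : ℝ → ℝ} (hv : IsValueFun v)
    (hwm : IsWeightFun wm) (hwp : IsWeightFun wp) {ξ : Ω → ℝ}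
    (hwd : ∀ x : ℝ, CptWellDef P v wm wp (fun ω => ξ ω - x)) :
    IsUpperSet {x : ℝ | cptE P v wm wp (fun ω => ξ ω - x) ≤ 0} := fun x y hxy hx =>
  le_trans (cptE_mono_s3 P hv hwm hwp (fun ω => sub_le_sub_left hxy (ξ ω)) (hwd y) (hwd x)) hx

end

theorem prgsr_eq_worst_gsr_general {Ω : Type*} [MeasurableSpace Ω] (P : Measure Ω)
    [IsProbabilityMeasure P]
    (V W : Set (ℝ → ℝ))
    (hV : ∀ v ∈ V, IsValueFun v) (hW : ∀ w ∈ W, IsWeightFun w)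
    (ξ : Ω → ℝ)
    (hwd : ∀ x : ℝ, ∀ v ∈ V, ∀ wm ∈ W, ∀ wp ∈ W,
      CptWellDef P v wm wp (fun ω => ξ ω - x)) :
    sInf ((fun x : ℝ => (x : EReal)) ''
        {x : ℝ | ∀ v ∈ V, ∀ wm ∈ W, ∀ wp ∈ W,
          cptE P v wm wp (fun ω => ξ ω - x) ≤ 0})
      = ⨆ v ∈ V, ⨆ wm ∈ W, ⨆ wp ∈ W, gsr P v wm wp ξ := by
  have key := EReal.sInf_image_coe_biInter_eq_biSup (I := V ×ˢ W ×ˢ W)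
    (S := fun i => {x : ℝ | cptE P i.1 i.2.1 i.2.2 (fun ω => ξ ω - x) ≤ 0})
    fun i ⟨hv, hwm, hwp⟩ => isUpperSet_setOf_cptE_sub_nonpos P (hV _ hv) (hW _ hwm) (hW _ hwp)
      fun x => hwd x _ hv _ hwm _ hwp
  convert key using 2
  · congr 1
    ext x
    simp only [mem_iInter, mem_ofPred_eq, mem_prod, and_imp, Prod.forall]
    exact ⟨fun h v wm wp hv hwm hwp => h v hv wm hwm wp hwp,
      fun h v hv wm hwm wp hwp => h v wm wp hv hwm hwp⟩
  · simp only [biSup_prod]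
    rfl

/-- the preference robust generalized shortfall risk
`ρ_{𝒱×𝒲}(ξ) = inf { x : E_{w⁻w⁺}[v(ξ−x)] ≤ 0 ∀ (v,w⁻,w⁺) ∈ 𝒱×𝒲×𝒲 }`
coincides with the worst-case generalized shortfall risk
`Π_{𝒱×𝒲}(ξ) = sup_{(v,w⁻,w⁺) ∈ 𝒱×𝒲×𝒲} ρ_{(v,w⁻,w⁺)}(ξ)`
in the extended real line. -/
theorem prgsr_eq_worst_gsr {Ω : Type*} [MeasurableSpace Ω] (P : Measure Ω)
    [IsProbabilityMeasure P]
    (V W : Set (ℝ → ℝ)) (hVne : V.Nonempty) (hWne : W.Nonempty)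
    (hV : ∀ v ∈ V, IsValueFun v) (hW : ∀ w ∈ W, IsWeightFun w)
    (ξ : Ω → ℝ) (hξ : Measurable ξ)
    (hwd : ∀ x : ℝ, ∀ v ∈ V, ∀ wm ∈ W, ∀ wp ∈ W,
      CptWellDef P v wm wp (fun ω => ξ ω - x)) :
    sInf ((fun x : ℝ => (x : EReal)) ''
        {x : ℝ | ∀ v ∈ V, ∀ wm ∈ W, ∀ wp ∈ W,
          cptE P v wm wp (fun ω => ξ ω - x) ≤ 0})
      = ⨆ v ∈ V, ⨆ wm ∈ W, ⨆ wp ∈ W, gsr P v wm wp ξ :=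
  prgsr_eq_worst_gsr_general P V W hV hW ξ hwd
end
end

section
/- Let 𝒱₁ be the set of all value functions that are convex on (−∞,0] and convex on [0,∞), 𝒲_con the set of all convex weighting functions, and 𝒲_cav the set of all concave weighting functions. Let T := { (v, w⁻, w⁺) ∈ 𝒱₁ × 𝒲_con × 𝒲_cav : v'₊(0)/v'₋(0) ≥ sup_{p∈(0,1)} (w⁻)'₋(p) / (1 − w⁺(1−·))'₊(p) }, where v'₋(0), v'₊(0) are the left and right derivatives of v at 0 and (w⁻)'₋(p), (1 − w⁺(1−·))'₊(p) are the left and right derivatives of w⁻ and of p ↦ 1 − w⁺(1−p) at p (these one-sided derivatives exist by convexity/concavity). Let ℛ_con be the set of triples (v, w⁻, w⁺) of a value function and two weighting functions for which ρ_{(v,w⁻,w⁺)} is a convex risk measure on bounded random variables. Then for every bounded random variable ξ, inf { x ∈ ℝ : E_{w⁻w⁺}[v(ξ − x)] ≤ 0 for all (v,w⁻,w⁺) ∈ T } = sup_{(v,w⁻,w⁺) ∈ ℛ_con} ρ_{(v,w⁻,w⁺)}(ξ). -/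
open MeasureTheory Set

noncomputable section

/-- Left derivative. -/
def leftD (f : ℝ → ℝ) (x : ℝ) : ℝ := derivWithin f (Iio x) x

/-- Right derivative. -/
def rightD (f : ℝ → ℝ) (x : ℝ) : ℝ := derivWithin f (Ioi x) x

/-- A convex risk measure on bounded random variables: monotone, translation
invariant and convex. -/
def IsConvexRM {Ω : Type*} [MeasurableSpace Ω] (ρ : (Ω → ℝ) → EReal) : Prop :=
  (∀ ξ η : Ω → ℝ, IsBddRV ξ → IsBddRV η → (∀ ω, ξ ω ≤ η ω) → ρ ξ ≤ ρ η) ∧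
  (∀ ξ : Ω → ℝ, IsBddRV ξ → ∀ c : ℝ,
    ρ (fun ω => ξ ω + c) = ρ ξ + (c : EReal)) ∧
  (∀ ξ η : Ω → ℝ, IsBddRV ξ → IsBddRV η → ∀ l : ℝ, l ∈ Icc (0:ℝ) 1 →
    ρ (fun ω => l * ξ ω + (1 - l) * η ω)
      ≤ (l : EReal) * ρ ξ + ((1 - l : ℝ) : EReal) * ρ η)

/-- The set `T` of triples `(v, w⁻, w⁺)` with `v` a value function convex on
`(-∞,0]` and on `[0,∞)`, `w⁻` a convex weighting function, `w⁺` a concave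
weighting function, satisfying the slope condition
`v'₊(0)/v'₋(0) ≥ sup_{p∈(0,1)} (w⁻)'₋(p)/(1 − w⁺(1−·))'₊(p)`. -/
def convexTuples : Set ((ℝ → ℝ) × (ℝ → ℝ) × (ℝ → ℝ)) :=
  {vw | IsValueFun vw.1 ∧ ConvexOn ℝ (Iic 0) vw.1 ∧ ConvexOn ℝ (Ici 0) vw.1 ∧
    IsWeightFun vw.2.1 ∧ ConvexOn ℝ (Icc 0 1) vw.2.1 ∧
    IsWeightFun vw.2.2 ∧ ConcaveOn ℝ (Icc 0 1) vw.2.2 ∧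
    (⨆ p : (Ioo (0:ℝ) 1),
        leftD vw.2.1 ↑p / rightD (fun q => 1 - vw.2.2 (1 - q)) ↑p)
      ≤ rightD vw.1 0 / leftD vw.1 0}

/-! Both sides equal `essSup ξ P`. If `ξ ≤ x` almost surely, the gain integral of `v(ξ - x)`
vanishes, so `x` is accepted by every triple; hence every GSR-CPT and the robust infimum are at
most the essential supremum. If `ℙ(ξ > x) > 0`, the triple `(max y (K y), id, id)` lies in `T`
for every `K ≥ 1`, and its distorted expectation of `ξ - x` is positive for large `K`: the gain
grows linearly in `K` while the loss stays bounded. Finally, a value function bounded below and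
jumping at `0⁺`, paired with a weight jumping at `0⁺`, rejects every `x` with `ℙ(ξ > x) > 0`, so
its GSR-CPT is the essential supremum itself, a convex risk measure. -/

open Filter Topology

theorem sInf_coe_image_Ici (a : ℝ) : sInf ((fun x : ℝ => (x : EReal)) '' Ici a) = a :=
  (IsLeast.isGLB ⟨mem_image_of_mem _ self_mem_Ici,
    forall_mem_image.2 fun _ hx => EReal.coe_le_coe_iff.2 hx⟩).sInf_eq

section EssSup

variable {Ω : Type*} [MeasurableSpace Ω] (P : Measure Ω) [IsProbabilityMeasure P]

theorem ae_le_iff_essSup_le {ζ : Ω → ℝ} {M : ℝ} (hζ : ∀ ω, |ζ ω| ≤ M) {x : ℝ} :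
    (∀ᵐ ω ∂P, ζ ω ≤ x) ↔ essSup ζ P ≤ x := by
  have hbdd : IsBoundedUnder (· ≤ ·) (ae P) ζ :=
    isBoundedUnder_of ⟨M, fun ω => (abs_le.mp (hζ ω)).2⟩
  have hcobdd : IsCoboundedUnder (· ≤ ·) (ae P) ζ :=
    isCoboundedUnder_le_of_le (ae P) fun ω => (abs_le.mp (hζ ω)).1
  refine ⟨fun h => essSup_le_of_ae_le x h hcobdd, fun h => ?_⟩
  filter_upwards [ae_le_essSup hbdd] with ω hω using hω.trans h

theorem isConvexRM_of_eq_essSup {ρ : (Ω → ℝ) → EReal}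
    (hρ : ∀ ζ, IsBddRV ζ → ρ ζ = essSup ζ P) : IsConvexRM ρ := by
  refine ⟨?_, ?_, ?_⟩
  · rintro ζ η hζ hη hle
    obtain ⟨Mζ, hMζ⟩ := hζ.2
    obtain ⟨Mη, hMη⟩ := hη.2
    rw [hρ ζ hζ, hρ η hη, EReal.coe_le_coe_iff, ← ae_le_iff_essSup_le P hMζ]
    filter_upwards [(ae_le_iff_essSup_le P hMη).2 le_rfl] with ω hω using (hle ω).trans hω
  · rintro ζ hζ c
    obtain ⟨hmeas, M, hM⟩ := hζ
    have hMc : ∀ ω, |ζ ω + c| ≤ M + |c| := fun ω => (abs_add_le _ _).trans (by linarith [hM ω])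
    rw [hρ _ ⟨hmeas.add_const c, M + |c|, hMc⟩, hρ ζ ⟨hmeas, M, hM⟩, ← EReal.coe_add,
      EReal.coe_eq_coe_iff]
    apply le_antisymm
    · rw [← ae_le_iff_essSup_le P hMc]
      filter_upwards [(ae_le_iff_essSup_le P hM).2 le_rfl] with ω hω using by linarith
    · rw [← le_sub_iff_add_le, ← ae_le_iff_essSup_le P hM]
      filter_upwards [(ae_le_iff_essSup_le P hMc).2 le_rfl] with ω hω using by linarith
  · rintro ζ η hζ hη l ⟨hl0, hl1⟩
    obtain ⟨hmζ, Mζ, hMζ⟩ := hζ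
    obtain ⟨hmη, Mη, hMη⟩ := hη
    have hM : ∀ ω, |l * ζ ω + (1 - l) * η ω| ≤ l * Mζ + (1 - l) * Mη := fun ω =>
      calc |l * ζ ω + (1 - l) * η ω| ≤ |l * ζ ω| + |(1 - l) * η ω| := abs_add_le _ _
        _ = l * |ζ ω| + (1 - l) * |η ω| := by
          rw [abs_mul, abs_mul, abs_of_nonneg hl0, abs_of_nonneg (sub_nonneg.2 hl1)]
        _ ≤ l * Mζ + (1 - l) * Mη := add_le_add (mul_le_mul_of_nonneg_left (hMζ ω) hl0)
          (mul_le_mul_of_nonneg_left (hMη ω) (sub_nonneg.2 hl1))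
    rw [hρ (fun ω => l * ζ ω + (1 - l) * η ω) ⟨by fun_prop, _, hM⟩, hρ ζ ⟨hmζ, Mζ, hMζ⟩,
      hρ η ⟨hmη, Mη, hMη⟩, ← EReal.coe_mul, ← EReal.coe_mul, ← EReal.coe_add,
      EReal.coe_le_coe_iff, ← ae_le_iff_essSup_le P hM]
    filter_upwards [(ae_le_iff_essSup_le P hMζ).2 le_rfl, (ae_le_iff_essSup_le P hMη).2 le_rfl]
      with ω hζω hηω
    gcongr

end EssSup

theorem integrableOn_Ioi_of_antitone {f : ℝ → ℝ} (hf : Antitone f) {a B : ℝ}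
    (hB : ∀ t, B < t → f t = 0) : IntegrableOn f (Ioi a) := by
  have hIcc : IntegrableOn f (Icc a B) := (hf.antitoneOn _).integrableOn_isCompact isCompact_Icc
  have hIoi : IntegrableOn f (Ioi B) :=
    integrableOn_zero.congr_fun (fun t ht => (hB t ht).symm) measurableSet_Ioi
  refine (hIcc.union hIoi).mono_set fun t ht => ?_
  rcases le_or_gt t B with h | h
  · exact Or.inl ⟨le_of_lt ht, h⟩
  · exact Or.inr h

theorem setIntegral_Ioi_le_mul {f : ℝ → ℝ} (hf : IntegrableOn f (Ioi 0)) {c d : ℝ}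
    (hc : 0 ≤ c) (hle : ∀ t ∈ Ioc 0 c, f t ≤ d) (hzero : ∀ t, c < t → f t = 0) :
    ∫ t in Ioi 0, f t ≤ c * d := by
  rw [setIntegral_eq_of_subset_of_forall_sdiff_eq_zero measurableSet_Ioi Ioc_subset_Ioi_self
    fun t ht => hzero t (lt_of_not_ge fun h => ht.2 ⟨ht.1, h⟩)]
  calc ∫ t in Ioc 0 c, f t ≤ ∫ _ in Ioc 0 c, d :=
        setIntegral_mono_on (hf.mono_set Ioc_subset_Ioi_self)
          (integrableOn_const measure_Ioc_lt_top.ne) measurableSet_Ioc hle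
    _ = c * d := by simp [hc]

theorem mul_le_setIntegral_Ioi {f : ℝ → ℝ} (hf : IntegrableOn f (Ioi 0))
    (hf0 : ∀ t ∈ Ioi 0, 0 ≤ f t) {c d : ℝ} (hc : 0 ≤ c) (hle : ∀ t ∈ Ioc 0 c, d ≤ f t) :
    c * d ≤ ∫ t in Ioi 0, f t :=
  calc c * d = ∫ _ in Ioc 0 c, d := by simp [hc]
    _ ≤ ∫ t in Ioc 0 c, f t :=
        setIntegral_mono_on (integrableOn_const measure_Ioc_lt_top.ne)
          (hf.mono_set Ioc_subset_Ioi_self) measurableSet_Ioc hle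
    _ ≤ ∫ t in Ioi 0, f t :=
        setIntegral_mono_set hf ((ae_restrict_iff' measurableSet_Ioi).2 (ae_of_all _ hf0))
          Ioc_subset_Ioi_self.eventuallyLE

theorem exists_pos_measure_add_le_ne_zero {Ω : Type*} [MeasurableSpace Ω] (μ : Measure Ω)
    {ζ : Ω → ℝ} {x : ℝ} (hx : ¬ ∀ᵐ ω ∂μ, ζ ω ≤ x) :
    ∃ ε > 0, μ {ω | x + ε ≤ ζ ω} ≠ 0 := by
  rw [ae_iff] at hx
  have hcover : {ω | ¬ζ ω ≤ x} ⊆ ⋃ n : ℕ, {ω | x + 1 / (n + 1) ≤ ζ ω} := fun ω hω => by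
    obtain ⟨n, hn⟩ := exists_nat_one_div_lt (sub_pos.2 (not_le.1 hω))
    exact mem_iUnion.2 ⟨n, by simp only [mem_ofPred_eq]; linarith⟩
  obtain ⟨n, hn⟩ :=
    exists_measure_pos_of_not_measure_iUnion_null fun h => hx (measure_mono_null hcover h)
  exact ⟨1 / (n + 1), by positivity, hn.ne'⟩

section Distortion

variable {Ω : Type*} [MeasurableSpace Ω] (P : Measure Ω) [IsProbabilityMeasure P]

theorem integrableOn_upperTail {w : ℝ → ℝ} (hw : Monotone w) (hw0 : w 0 = 0)
    {Y : Ω → ℝ} {B : ℝ} (hY : ∀ ω, Y ω ≤ B) :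
    IntegrableOn (fun t => w (P {ω | t ≤ Y ω}).toReal) (Ioi 0) := by
  refine integrableOn_Ioi_of_antitone (fun s t hst => hw ?_) (B := B) fun t ht => ?_
  · exact ENNReal.toReal_mono (measure_ne_top _ _) (measure_mono fun ω hω => hst.trans hω)
  · have : {ω | t ≤ Y ω} = ∅ :=
      eq_empty_of_forall_notMem fun ω hω => (hY ω).not_gt (ht.trans_le hω)
    simp [this, hw0]

theorem setIntegral_lowerTail_le {Y : Ω → ℝ} {c : ℝ} (hc : 0 ≤ c) (hY : ∀ ω, -c ≤ Y ω) :
    ∫ t in Ioi 0, (P {ω | Y ω ≤ -t}).toReal ≤ c := by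
  have hzero : ∀ t, c < t → (P {ω | Y ω ≤ -t}).toReal = 0 := fun t ht => by
    have : {ω | Y ω ≤ -t} = ∅ :=
      eq_empty_of_forall_notMem fun ω hω => by linarith [hY ω, show Y ω ≤ -t from hω]
    simp [this]
  have hanti : Antitone fun t => (P {ω | Y ω ≤ -t}).toReal := fun s t hst =>
    ENNReal.toReal_mono (measure_ne_top _ _) (measure_mono fun ω hω => by
      simp only [mem_ofPred_eq] at hω ⊢; linarith)
  simpa using setIntegral_Ioi_le_mul (integrableOn_Ioi_of_antitone hanti hzero) hc
    (fun t _ => measureReal_le_one) hzero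

theorem cptE_nonpos_of_ae_le {v wm wp : ℝ → ℝ} (hv : Monotone v) (hv0 : v 0 = 0)
    (hwm : ∀ p ∈ Icc (0 : ℝ) 1, 0 ≤ wm p) (hwp : wp 0 = 0) {ζ : Ω → ℝ} {x : ℝ}
    (hx : ∀ᵐ ω ∂P, ζ ω ≤ x) : cptE P v wm wp (fun ω => ζ ω - x) ≤ 0 := by
  have hgain : ∀ t ∈ Ioi (0 : ℝ), wp (P {ω | t ≤ v (ζ ω - x)}).toReal = 0 := fun t ht => by
    have hsub : {ω | t ≤ v (ζ ω - x)} ⊆ {ω | ¬ζ ω ≤ x} := fun ω hω hle => by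
      have : v (ζ ω - x) ≤ 0 := hv0 ▸ hv (sub_nonpos.2 hle)
      exact (mem_Ioi.1 ht).not_ge ((show t ≤ v (ζ ω - x) from hω).trans this)
    simp [measure_mono_null hsub (ae_iff.1 hx), hwp]
  have hloss : 0 ≤ ∫ t in Ioi 0, wm (P {ω | v (ζ ω - x) ≤ -t}).toReal :=
    setIntegral_nonneg measurableSet_Ioi fun t _ =>
      hwm _ ⟨ENNReal.toReal_nonneg, measureReal_le_one⟩
  rw [cptE, setIntegral_congr_fun measurableSet_Ioi hgain, integral_zero]
  linarith

theorem gsr_le_essSup {v wm wp : ℝ → ℝ} (hv : IsValueFun v) (hwm : IsWeightFun wm)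
    (hwp : IsWeightFun wp) {ζ : Ω → ℝ} {M : ℝ} (hζ : ∀ ω, |ζ ω| ≤ M) :
    gsr P v wm wp ζ ≤ essSup ζ P := by
  rw [gsr, ← sInf_coe_image_Ici (essSup ζ P)]
  exact sInf_le_sInf (image_mono fun x hx => cptE_nonpos_of_ae_le P hv.1.monotone hv.2
    (fun p hp => (hwm.2.1 hp).1) hwp.2.2.1 ((ae_le_iff_essSup_le P hζ).2 hx))

end Distortion

section Kink

def kink (K y : ℝ) : ℝ := max y (K * y)

variable {K : ℝ}

theorem kink_of_nonpos (hK : 1 ≤ K) {y : ℝ} (hy : y ≤ 0) : kink K y = y :=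
  max_eq_left (by nlinarith)

theorem kink_of_nonneg (hK : 1 ≤ K) {y : ℝ} (hy : 0 ≤ y) : kink K y = K * y :=
  max_eq_right (by nlinarith)

theorem kink_strictMono (hK : 0 < K) : StrictMono (kink K) := fun _ _ hab =>
  max_lt (lt_max_of_lt_left hab) (lt_max_of_lt_right (mul_lt_mul_of_pos_left hab hK))

theorem convexOn_kink (hK : 0 ≤ K) : ConvexOn ℝ univ (kink K) :=
  (convexOn_id convex_univ).sup ((convexOn_id convex_univ).smul hK)

theorem leftD_kink_zero (hK : 1 ≤ K) : leftD (kink K) 0 = 1 := by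
  have h : kink K =ᶠ[𝓝[<] 0] id :=
    eventually_nhdsWithin_of_forall fun y hy => kink_of_nonpos hK (le_of_lt hy)
  rw [leftD, h.derivWithin_eq (kink_of_nonpos hK le_rfl),
    derivWithin_id _ _ (uniqueDiffWithinAt_Iio 0)]

theorem rightD_kink_zero (hK : 1 ≤ K) : rightD (kink K) 0 = K := by
  have h : kink K =ᶠ[𝓝[>] 0] fun y => K * y :=
    eventually_nhdsWithin_of_forall fun y hy => kink_of_nonneg hK (le_of_lt hy)
  rw [rightD, h.derivWithin_eq (kink_of_nonneg hK le_rfl),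
    ((hasDerivAt_id' (0 : ℝ)).const_mul K).hasDerivWithinAt.derivWithin
      (uniqueDiffWithinAt_Ioi 0), mul_one]

theorem isWeightFun_id : IsWeightFun id :=
  ⟨strictMono_id.strictMonoOn _, fun _ hp => hp, rfl, rfl⟩

theorem kink_mem_convexTuples (hK : 1 ≤ K) : (kink K, id, id) ∈ convexTuples := by
  have hK0 : 0 ≤ K := zero_le_one.trans hK
  refine ⟨⟨kink_strictMono (zero_lt_one.trans_le hK), by simp [kink]⟩,
    (convexOn_kink hK0).subset (subset_univ _) (convex_Iic 0),
    (convexOn_kink hK0).subset (subset_univ _) (convex_Ici 0),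
    isWeightFun_id, convexOn_id (convex_Icc 0 1), isWeightFun_id, concaveOn_id (convex_Icc 0 1),
    ?_⟩
  have hslope : ∀ p : ℝ, leftD id p / rightD (fun q => 1 - id (1 - q)) p = 1 := fun p => by
    simp only [id, sub_sub_cancel, leftD, rightD]
    rw [derivWithin_id _ _ (uniqueDiffWithinAt_Iio p),
      derivWithin_id' _ _ (uniqueDiffWithinAt_Ioi p), div_one]
  have : Nonempty (Ioo (0 : ℝ) 1) := ⟨⟨1 / 2, by norm_num, by norm_num⟩⟩
  simp only [hslope, ciSup_const, rightD_kink_zero hK, leftD_kink_zero hK, div_one, hK]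

end Kink

-- Bounded below by `-1` and above `3` on `(0, ∞)`: with `jumpWeight ≥ 1 / 2` on `(0, 1]`, any event
-- `{ζ > x}` of positive probability yields a gain `≥ 3 / 2`, beating the loss `≤ 1`.
def jumpValue (y : ℝ) : ℝ := if y ≤ 0 then Real.exp y - 1 else Real.exp y + 2

def jumpWeight (p : ℝ) : ℝ := if p ≤ 0 then 0 else (1 + p) / 2

theorem jumpValue_strictMono : StrictMono jumpValue := fun a b hab => by
  have := Real.exp_lt_exp.2 hab
  unfold jumpValue
  split_ifs <;> linarith

theorem isValueFun_jumpValue : IsValueFun jumpValue :=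
  ⟨jumpValue_strictMono, by simp [jumpValue]⟩

theorem neg_one_lt_jumpValue (y : ℝ) : -1 < jumpValue y := by
  have := Real.exp_pos y
  unfold jumpValue
  split_ifs <;> linarith

theorem three_lt_jumpValue {y : ℝ} (hy : 0 < y) : 3 < jumpValue y := by
  have := Real.one_lt_exp_iff.2 hy
  simp only [jumpValue, if_neg hy.not_ge]
  linarith

theorem jumpWeight_monotone : Monotone jumpWeight := fun a b hab => by
  unfold jumpWeight
  split_ifs <;> linarith

theorem isWeightFun_jumpWeight : IsWeightFun jumpWeight := by
  refine ⟨fun a ha b hb hab => ?_, fun p hp => ?_, by simp [jumpWeight], by norm_num [jumpWeight]⟩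
  · have := ha.1
    unfold jumpWeight
    split_ifs <;> linarith
  · obtain ⟨hp0, hp1⟩ := hp
    unfold jumpWeight
    split_ifs <;> constructor <;> linarith

theorem jumpWeight_nonneg (p : ℝ) : 0 ≤ jumpWeight p := by
  unfold jumpWeight
  split_ifs <;> linarith

theorem half_le_jumpWeight {p : ℝ} (hp : 0 < p) : 1 / 2 ≤ jumpWeight p := by
  simp only [jumpWeight, if_neg hp.not_ge]
  linarith

section Witnesses

variable {Ω : Type*} [MeasurableSpace Ω] (P : Measure Ω) [IsProbabilityMeasure P]

theorem exists_cptE_kink_pos {ζ : Ω → ℝ} {M : ℝ} (hζ : ∀ ω, |ζ ω| ≤ M) {x : ℝ}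
    (hx : ¬ ∀ᵐ ω ∂P, ζ ω ≤ x) : ∃ K, 1 ≤ K ∧ 0 < cptE P (kink K) id id (fun ω => ζ ω - x) := by
  obtain ⟨ε, hε, hq⟩ := exists_pos_measure_add_le_ne_zero P hx
  set q := (P {ω | x + ε ≤ ζ ω}).toReal
  have hq0 : 0 < q := ENNReal.toReal_pos hq (measure_ne_top _ _)
  set c := max (M + x) 0
  set K := max 1 ((c + 1) / (ε * q))
  have hK : 1 ≤ K := le_max_left _ _
  have hKε : c + 1 ≤ K * ε * q := by
    have := mul_le_mul_of_nonneg_right (le_max_right 1 ((c + 1) / (ε * q))) (by positivity :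
      0 ≤ ε * q)
    rwa [div_mul_cancel₀ _ (by positivity), ← mul_assoc] at this
  have hgain : K * ε * q ≤ ∫ t in Ioi 0, (P {ω | t ≤ kink K (ζ ω - x)}).toReal := by
    refine mul_le_setIntegral_Ioi (integrableOn_upperTail P monotone_id rfl (B := kink K (M - x))
      fun ω => (kink_strictMono (by positivity)).monotone (by linarith [(abs_le.1 (hζ ω)).2]))
      (fun _ _ => ENNReal.toReal_nonneg) (by positivity) fun t ht => ?_
    refine ENNReal.toReal_mono (measure_ne_top _ _) (measure_mono fun ω hω => ?_)
    have hpos : ε ≤ ζ ω - x := by simp only [mem_ofPred_eq] at hω; linarith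
    calc t ≤ K * ε := ht.2
      _ ≤ K * (ζ ω - x) := by gcongr
      _ ≤ kink K (ζ ω - x) := le_max_right _ _
  have hloss : ∫ t in Ioi 0, (P {ω | kink K (ζ ω - x) ≤ -t}).toReal ≤ c :=
    setIntegral_lowerTail_le P (le_max_right _ _) fun ω =>
      calc -c ≤ ζ ω - x := by linarith [le_max_left (M + x) 0, (abs_le.1 (hζ ω)).1]
        _ ≤ kink K (ζ ω - x) := le_max_left _ _
  refine ⟨K, hK, ?_⟩
  simp only [cptE, id]
  linarith

theorem forall_convexTuples_cptE_nonpos_iff {ζ : Ω → ℝ} {M : ℝ} (hζ : ∀ ω, |ζ ω| ≤ M) {x : ℝ} :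
    (∀ vw ∈ convexTuples, cptE P vw.1 vw.2.1 vw.2.2 (fun ω => ζ ω - x) ≤ 0) ↔
      ∀ᵐ ω ∂P, ζ ω ≤ x := by
  refine ⟨fun h => not_not.1 fun hx => ?_, fun hx vw hvw => ?_⟩
  · obtain ⟨K, hK, hpos⟩ := exists_cptE_kink_pos P hζ hx
    exact hpos.not_ge (h _ (kink_mem_convexTuples hK))
  · obtain ⟨hv, -, -, hwm, -, hwp, -, -⟩ := hvw
    exact cptE_nonpos_of_ae_le P hv.1.monotone hv.2 (fun p hp => (hwm.2.1 hp).1) hwp.2.2.1 hx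

theorem cptE_jump_pos {ζ : Ω → ℝ} {M : ℝ} (hζ : ∀ ω, ζ ω ≤ M) {x : ℝ}
    (hx : ¬ ∀ᵐ ω ∂P, ζ ω ≤ x) : 0 < cptE P jumpValue id jumpWeight (fun ω => ζ ω - x) := by
  have hq : P {ω | ¬ζ ω ≤ x} ≠ 0 := fun h => hx (ae_iff.2 h)
  have hgain :
      3 * (1 / 2) ≤ ∫ t in Ioi 0, jumpWeight (P {ω | t ≤ jumpValue (ζ ω - x)}).toReal := by
    refine mul_le_setIntegral_Ioi
      (integrableOn_upperTail P jumpWeight_monotone (by simp [jumpWeight]) (B := jumpValue (M - x)) fun ω => jumpValue_strictMono.monotone (by linarith [hζ ω]))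
      (fun _ _ => jumpWeight_nonneg _) (by norm_num) fun t ht => half_le_jumpWeight ?_
    have hsub : {ω | ¬ζ ω ≤ x} ⊆ {ω | t ≤ jumpValue (ζ ω - x)} := fun ω hω =>
      ht.2.trans (three_lt_jumpValue (sub_pos.2 (not_le.1 hω))).le
    exact ENNReal.toReal_pos (fun h => hq (measure_mono_null hsub h)) (measure_ne_top _ _)
  have hloss : ∫ t in Ioi 0, (P {ω | jumpValue (ζ ω - x) ≤ -t}).toReal ≤ 1 :=
    setIntegral_lowerTail_le P zero_le_one fun ω => (neg_one_lt_jumpValue _).le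
  simp only [cptE, id]
  linarith

theorem gsr_jump_eq_essSup {ζ : Ω → ℝ} {M : ℝ} (hζ : ∀ ω, |ζ ω| ≤ M) :
    gsr P jumpValue id jumpWeight ζ = essSup ζ P := by
  have hacc : {x | cptE P jumpValue id jumpWeight (fun ω => ζ ω - x) ≤ 0} = Ici (essSup ζ P) := by
    ext x
    refine Iff.trans ⟨fun h => not_not.1 fun hx => ?_, fun hx => ?_⟩ (ae_le_iff_essSup_le P hζ)
    · exact (cptE_jump_pos P (fun ω => (abs_le.1 (hζ ω)).2) hx).not_ge h
    · exact cptE_nonpos_of_ae_le P jumpValue_strictMono.monotone isValueFun_jumpValue.2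
        (fun p hp => hp.1) isWeightFun_jumpWeight.2.2.1 hx
  rw [gsr, hacc, sInf_coe_image_Ici]

end Witnesses

/-- the robust shortfall risk over the set `T` equals the
supremum of the GSR-CPT over all tuples inducing a convex risk measure. -/
theorem prgsr_convex {Ω : Type*} [MeasurableSpace Ω] (P : Measure Ω)
    [IsProbabilityMeasure P]
    (ξ : Ω → ℝ) (hξ : IsBddRV ξ) :
    sInf ((fun x : ℝ => (x : EReal)) ''
        {x : ℝ | ∀ vw ∈ convexTuples,
          cptE P vw.1 vw.2.1 vw.2.2 (fun ω => ξ ω - x) ≤ 0})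
      = ⨆ vw ∈ {vw : (ℝ → ℝ) × (ℝ → ℝ) × (ℝ → ℝ) |
            IsValueFun vw.1 ∧ IsWeightFun vw.2.1 ∧ IsWeightFun vw.2.2 ∧
            IsConvexRM (fun ζ : Ω → ℝ => gsr P vw.1 vw.2.1 vw.2.2 ζ)},
          gsr P vw.1 vw.2.1 vw.2.2 ξ := by
  obtain ⟨M, hM⟩ := hξ.2
  have hrobust : {x : ℝ | ∀ vw ∈ convexTuples,
      cptE P vw.1 vw.2.1 vw.2.2 (fun ω => ξ ω - x) ≤ 0} = Ici (essSup ξ P) := by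
    ext x
    exact (forall_convexTuples_cptE_nonpos_iff P hM).trans (ae_le_iff_essSup_le P hM)
  have hjump : IsConvexRM fun ζ : Ω → ℝ => gsr P jumpValue id jumpWeight ζ :=
    isConvexRM_of_eq_essSup P fun _ ⟨_, _, hζ⟩ => gsr_jump_eq_essSup P hζ
  rw [hrobust, sInf_coe_image_Ici]
  refine le_antisymm ?_ (iSup₂_le fun vw hvw => gsr_le_essSup P hvw.1 hvw.2.1 hvw.2.2.1 hM)
  rw [← gsr_jump_eq_essSup P hM]
  exact le_iSup₂_of_le (jumpValue, id, jumpWeight)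
    ⟨isValueFun_jumpValue, isWeightFun_id, isWeightFun_jumpWeight, hjump⟩ le_rfl
end
end

section
/- Let 𝒱_coh := { v : ℝ → ℝ : there exist a₁, a₂ > 0 with v(x) = a₁x for x ≥ 0 and v(x) = a₂x for x < 0 }, let 𝒲₁ be the set of all convex weighting functions and 𝒲₂ the set of all concave weighting functions. Let ℛ_coh be the set of triples (v, w⁻, w⁺) of a value function and two weighting functions for which ρ_{(v,w⁻,w⁺)} is a coherent risk measure on bounded random variables. Then for every bounded random variable ξ, inf { x ∈ ℝ : E_{w⁻w⁺}[v(ξ − x)] ≤ 0 for all (v,w⁻,w⁺) ∈ 𝒱_coh × 𝒲₁ × 𝒲₂ } = sup_{(v,w⁻,w⁺) ∈ ℛ_coh} ρ_{(v,w⁻,w⁺)}(ξ). -/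
open MeasureTheory Set

noncomputable section

/-- A coherent risk measure on bounded random variables: monotone, translation
invariant, subadditive and positively homogeneous. -/
def IsCoherentRM {Ω : Type*} [MeasurableSpace Ω] (ρ : (Ω → ℝ) → EReal) : Prop :=
  (∀ ξ η : Ω → ℝ, IsBddRV ξ → IsBddRV η → (∀ ω, ξ ω ≤ η ω) → ρ ξ ≤ ρ η) ∧
  (∀ ξ : Ω → ℝ, IsBddRV ξ → ∀ c : ℝ,
    ρ (fun ω => ξ ω + c) = ρ ξ + (c : EReal)) ∧
  (∀ ξ η : Ω → ℝ, IsBddRV ξ → IsBddRV η →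
    ρ (fun ω => ξ ω + η ω) ≤ ρ ξ + ρ η) ∧
  (∀ ξ : Ω → ℝ, IsBddRV ξ → ∀ l : ℝ, 0 ≤ l →
    ρ (fun ω => l * ξ ω) = (l : EReal) * ρ ξ)

/-- The set of positively homogeneous piecewise linear value functions
`v(x) = a₁ x` for `x ≥ 0` and `v(x) = a₂ x` for `x < 0` with `a₁, a₂ > 0`. -/
def cohValueFuns : Set (ℝ → ℝ) :=
  {v | ∃ a₁ a₂ : ℝ, 0 < a₁ ∧ 0 < a₂ ∧
    (∀ x : ℝ, 0 ≤ x → v x = a₁ * x) ∧ ∀ x : ℝ, x < 0 → v x = a₂ * x}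

/-!
Both sides equal the essential supremum `M` of `ξ`.

If `x ≥ M`, then `v (ξ - x) ≤ 0` almost surely, so the gain integral vanishes (`w⁺ 0 = 0`)
while the loss integral is `≥ 0`: the CPT expectation is `≤ 0` for every triple. Hence the
left-hand side, and every GSR-CPT, is at most `M`.

For the reverse inequalities take `v = id` and, for `ε ∈ (0, 1]`, the convex weight
`ε p + (1 - ε) 𝟙{p ≥ 1}` and the concave weight `ε p + (1 - ε) 𝟙{p > 0}`. The CPT expectation
is affine in the weights; with identity weights it is the expectation (layer cake), with the two
indicator weights it is the essential supremum. So `E[v (ξ - x)] = ε 𝔼ξ + (1 - ε) M - x`, and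
the GSR-CPT of this triple is `ε 𝔼ξ + (1 - ε) M`, a coherent risk measure. Letting `ε → 0`
gives both lower bounds.
-/

open Filter Topology

section EssSup

variable {Ω : Type*} [MeasurableSpace Ω] {μ : Measure Ω} {ζ η : Ω → ℝ} {B C : ℝ}

lemma measure_setOf_le_eq_zero_of_essSup_lt (hB : ∀ ω, |ζ ω| ≤ B) {t : ℝ}
    (ht : essSup ζ μ < t) : μ {ω | t ≤ ζ ω} = 0 := by
  simpa only [not_lt] using
    ae_iff.1 (ae_lt_of_essSup_lt ht (isBoundedUnder_of ⟨B, fun ω => (abs_le.1 (hB ω)).2⟩))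

variable [NeZero μ]

lemma essSup_le_iff_of_abs_le (hB : ∀ ω, |ζ ω| ≤ B) {m : ℝ} :
    essSup ζ μ ≤ m ↔ ∀ᵐ ω ∂μ, ζ ω ≤ m :=
  ⟨fun h => (ae_le_essSup (isBoundedUnder_of ⟨B, fun ω => (abs_le.1 (hB ω)).2⟩)).mono
      fun _ h' => h'.trans h,
    fun h => essSup_le_of_ae_le m h (isCoboundedUnder_le_of_le _ fun ω => (abs_le.1 (hB ω)).1)⟩

lemma ae_le_essSup_of_abs_le (hB : ∀ ω, |ζ ω| ≤ B) : ∀ᵐ ω ∂μ, ζ ω ≤ essSup ζ μ :=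
  (essSup_le_iff_of_abs_le hB).1 le_rfl

lemma measure_setOf_le_ne_zero_of_lt_essSup (hB : ∀ ω, |ζ ω| ≤ B) {t : ℝ}
    (ht : t < essSup ζ μ) : μ {ω | t ≤ ζ ω} ≠ 0 := by
  intro h
  refine ht.not_ge ((essSup_le_iff_of_abs_le hB).2 ?_)
  filter_upwards [measure_eq_zero_iff_ae_notMem.1 h] with ω hω
  exact (not_le.1 hω).le

lemma essSup_mono_of_abs_le (hζ : ∀ ω, |ζ ω| ≤ B) (hη : ∀ ω, |η ω| ≤ C)
    (h : ∀ ω, ζ ω ≤ η ω) : essSup ζ μ ≤ essSup η μ :=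
  (essSup_le_iff_of_abs_le hζ).2 ((ae_le_essSup_of_abs_le hη).mono fun ω h' => (h ω).trans h')

lemma essSup_add_le_of_abs_le (hζ : ∀ ω, |ζ ω| ≤ B) (hη : ∀ ω, |η ω| ≤ C) :
    essSup (fun ω => ζ ω + η ω) μ ≤ essSup ζ μ + essSup η μ := by
  rw [essSup_le_iff_of_abs_le fun ω => (abs_add_le _ _).trans (add_le_add (hζ ω) (hη ω))]
  filter_upwards [ae_le_essSup_of_abs_le hζ, ae_le_essSup_of_abs_le hη] with ω h₁ h₂
  exact add_le_add h₁ h₂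

lemma essSup_add_const_of_abs_le (hB : ∀ ω, |ζ ω| ≤ B) (c : ℝ) :
    essSup (fun ω => ζ ω + c) μ = essSup ζ μ + c := by
  have hB' : ∀ ω, |ζ ω + c| ≤ B + |c| := fun ω => (abs_add_le _ _).trans (by linarith [hB ω])
  refine le_antisymm ((essSup_le_iff_of_abs_le hB').2 ?_) ?_
  · filter_upwards [ae_le_essSup_of_abs_le hB] with ω h
    linarith
  · rw [← le_sub_iff_add_le, essSup_le_iff_of_abs_le hB]
    filter_upwards [ae_le_essSup_of_abs_le hB'] with ω h
    linarith

lemma essSup_const_mul_of_abs_le (hB : ∀ ω, |ζ ω| ≤ B) {l : ℝ} (hl : 0 ≤ l) :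
    essSup (fun ω => l * ζ ω) μ = l * essSup ζ μ := by
  rcases hl.eq_or_lt with rfl | hl
  · simp
  have hB' : ∀ ω, |l * ζ ω| ≤ l * B := fun ω => by
    rw [abs_mul, abs_of_pos hl]
    exact mul_le_mul_of_nonneg_left (hB ω) hl.le
  refine le_antisymm ((essSup_le_iff_of_abs_le hB').2 ?_) ?_
  · filter_upwards [ae_le_essSup_of_abs_le hB] with ω h
    exact mul_le_mul_of_nonneg_left h hl.le
  · rw [← le_div_iff₀' hl, essSup_le_iff_of_abs_le hB]
    filter_upwards [ae_le_essSup_of_abs_le hB'] with ω h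
    rwa [le_div_iff₀' hl]

end EssSup

lemma Antitone.integrableOn_Ioi {f : ℝ → ℝ} (hf : Antitone f) {a K : ℝ}
    (hK : ∀ t, K < t → f t = 0) : IntegrableOn f (Ioi a) := by
  have h₁ : IntegrableOn f (Icc a K) := hf.antitoneOn _ |>.integrableOn_isCompact isCompact_Icc
  have h₂ : IntegrableOn f (Ioi K) :=
    integrableOn_zero.congr_fun (fun t ht => (hK t ht).symm) measurableSet_Ioi
  exact (h₁.union h₂).mono_set fun t ht => (le_or_gt t K).imp (fun h => ⟨le_of_lt ht, h⟩) id

lemma IsUpperSet.monotone_indicator_one {α : Type*} [Preorder α] {s : Set α}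
    (hs : IsUpperSet s) : Monotone (s.indicator (1 : α → ℝ)) := fun x y hxy => by
  by_cases hx : x ∈ s
  · simp [hx, hs hxy hx]
  · rw [indicator_of_notMem hx]
    exact indicator_nonneg (fun _ _ => zero_le_one) y

section CPT

variable {Ω : Type*} [MeasurableSpace Ω] {μ : Measure Ω} {v wm wp : ℝ → ℝ} {ζ : Ω → ℝ}

lemma cptWellDef_of_abs_le [IsFiniteMeasure μ] (hwm : Monotone wm) (hwp : Monotone wp)
    (hwm0 : wm 0 = 0) (hwp0 : wp 0 = 0) {B : ℝ} (hB : ∀ ω, |v (ζ ω)| ≤ B) :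
    CptWellDef μ v wm wp ζ := by
  refine ⟨Antitone.integrableOn_Ioi (K := B) ?_ fun t ht => ?_,
    Antitone.integrableOn_Ioi (K := B) ?_ fun t ht => ?_⟩
  · exact hwp.comp_antitone fun s t hst => ENNReal.toReal_mono (measure_ne_top _ _)
      (measure_mono fun ω hω => hst.trans hω)
  · have : {ω | t ≤ v (ζ ω)} = ∅ :=
      eq_empty_of_forall_notMem fun ω hω => (hω.trans (abs_le.1 (hB ω)).2).not_gt ht
    simp [this, hwp0]
  · exact hwm.comp_antitone fun s t hst => ENNReal.toReal_mono (measure_ne_top _ _)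
      (measure_mono fun ω hω => hω.trans (neg_le_neg hst))
  · have : {ω | v (ζ ω) ≤ -t} = ∅ :=
      eq_empty_of_forall_notMem fun ω hω => by linarith [(abs_le.1 (hB ω)).1, hω.out]
    simp [this, hwm0]

lemma cptE_mul_add_mul_weights {wm₁ wp₁ wm₂ wp₂ : ℝ → ℝ} (h₁ : CptWellDef μ v wm₁ wp₁ ζ)
    (h₂ : CptWellDef μ v wm₂ wp₂ ζ) (a b : ℝ) :
    cptE μ v (fun p => a * wm₁ p + b * wm₂ p) (fun p => a * wp₁ p + b * wp₂ p) ζ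
      = a * cptE μ v wm₁ wp₁ ζ + b * cptE μ v wm₂ wp₂ ζ := by
  simp only [cptE]
  rw [integral_add (h₁.1.const_mul a) (h₂.1.const_mul b),
    integral_add (h₁.2.const_mul a) (h₂.2.const_mul b)]
  simp only [integral_const_mul]
  ring

lemma cptE_id_weights (hζ : Integrable ζ μ) : cptE μ id id id ζ = ∫ ω, ζ ω ∂μ := by
  have hgain : ∫ t in Ioi (0:ℝ), μ.real {ω | t ≤ ζ ω} = ∫ ω, max (ζ ω) 0 ∂μ := by
    rw [hζ.pos_part.integral_eq_integral_meas_le (ae_of_all _ fun ω => le_max_right _ _)]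
    refine setIntegral_congr_fun measurableSet_Ioi fun t ht => ?_
    simp only [le_max_iff, not_le.2 (mem_Ioi.1 ht), or_false]
  have hloss : ∫ t in Ioi (0:ℝ), μ.real {ω | ζ ω ≤ -t} = ∫ ω, max (-ζ ω) 0 ∂μ := by
    rw [hζ.neg_part.integral_eq_integral_meas_le (ae_of_all _ fun ω => le_max_right _ _)]
    refine setIntegral_congr_fun measurableSet_Ioi fun t ht => ?_
    simp only [le_max_iff, not_le.2 (mem_Ioi.1 ht), or_false, le_neg]
  simp only [cptE, id, ← measureReal_def]
  rw [hgain, hloss, ← integral_sub hζ.pos_part hζ.neg_part]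
  simp only [max_zero_sub_max_neg_zero_eq_self]

lemma one_le_measureReal_setOf_le_iff [IsProbabilityMeasure μ] (hζ : Measurable ζ) {B : ℝ}
    (hB : ∀ ω, |ζ ω| ≤ B) (u : ℝ) : 1 ≤ μ.real {ω | ζ ω ≤ u} ↔ essSup ζ μ ≤ u := by
  rw [essSup_le_iff_of_abs_le hB,
    ae_iff_measure_eq (measurableSet_le hζ measurable_const).nullMeasurableSet, measure_univ,
    ← one_le_prob_iff, measureReal_def, ← ENNReal.ofReal_le_iff_le_toReal (measure_ne_top _ _),
    ENNReal.ofReal_one]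

lemma cptE_indicator_weights [IsProbabilityMeasure μ] (hζ : Measurable ζ) {B : ℝ}
    (hB : ∀ ω, |ζ ω| ≤ B) :
    cptE μ id ((Ici 1).indicator 1) ((Ioi 0).indicator 1) ζ = essSup ζ μ := by
  set M := essSup ζ μ
  have hgain : ∀ t ≠ M,
      (Ioi (0:ℝ)).indicator 1 (μ.real {ω | t ≤ ζ ω}) = (Iio M).indicator (1 : ℝ → ℝ) t := by
    intro t ht
    rcases ht.lt_or_gt with ht | ht
    · rw [indicator_of_mem (mem_Iio.2 ht), indicator_of_mem (show μ.real {ω | t ≤ ζ ω} ∈ Ioi 0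
        from ENNReal.toReal_pos (measure_setOf_le_ne_zero_of_lt_essSup hB ht) (measure_ne_top _ _))]
      rfl
    · rw [indicator_of_notMem (notMem_Iio.2 ht.le), measureReal_def,
        measure_setOf_le_eq_zero_of_essSup_lt hB ht]
      simp
  have hloss : ∀ t,
      (Ici (1:ℝ)).indicator 1 (μ.real {ω | ζ ω ≤ -t}) = (Iic (-M)).indicator (1 : ℝ → ℝ) t := by
    intro t
    simp only [indicator_apply, mem_Ici, mem_Iic, one_le_measureReal_setOf_le_iff hζ hB, le_neg,
      Pi.one_apply, M]
  have hgain_int : ∫ t in Ioi (0:ℝ), (Ioi (0:ℝ)).indicator 1 (μ.real {ω | t ≤ ζ ω}) = max M 0 := by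
    rw [integral_congr_ae (g := (Iio M).indicator (1 : ℝ → ℝ)) (ae_restrict_of_ae
        ((measure_eq_zero_iff_ae_notMem.1 (measure_singleton M)).mono fun t ht => hgain t ht)),
      integral_indicator_one measurableSet_Iio, measureReal_restrict_apply measurableSet_Iio,
      Iio_inter_Ioi, Real.volume_real_Ioo, sub_zero]
  have hloss_int :
      ∫ t in Ioi (0:ℝ), (Ici (1:ℝ)).indicator 1 (μ.real {ω | ζ ω ≤ -t}) = max (-M) 0 := by
    simp only [hloss]
    rw [integral_indicator_one measurableSet_Iic, measureReal_restrict_apply measurableSet_Iic,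
      Iic_inter_Ioi, Real.volume_real_Ioc, sub_zero]
  simp only [cptE, id, ← measureReal_def]
  rw [hgain_int, hloss_int, max_zero_sub_max_neg_zero_eq_self]

lemma cptE_nonpos_of_ae_nonpos [IsZeroOrProbabilityMeasure μ] (hwm : MapsTo wm (Icc 0 1) (Icc 0 1))
    (hwp : wp 0 = 0) (h : ∀ᵐ ω ∂μ, v (ζ ω) ≤ 0) : cptE μ v wm wp ζ ≤ 0 := by
  have hgain : ∫ t in Ioi (0:ℝ), wp (μ {ω | t ≤ v (ζ ω)}).toReal = 0 := by
    refine setIntegral_eq_zero_of_forall_eq_zero fun t ht => ?_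
    have : μ {ω | t ≤ v (ζ ω)} = 0 := measure_mono_null
      (fun ω hω hle => (mem_Ioi.1 ht).not_ge (hω.out.trans hle)) (ae_iff.1 h)
    rw [this, ENNReal.toReal_zero, hwp]
  have hloss : 0 ≤ ∫ t in Ioi (0:ℝ), wm (μ {ω | v (ζ ω) ≤ -t}).toReal :=
    integral_nonneg fun t => (hwm ⟨measureReal_nonneg, measureReal_le_one⟩).1
  rw [cptE, hgain]
  linarith

lemma cptE_sub_nonpos_of_essSup_le [IsProbabilityMeasure μ] (hv : Monotone v) (hv0 : v 0 = 0)
    (hwm : MapsTo wm (Icc 0 1) (Icc 0 1)) (hwp : wp 0 = 0) {B : ℝ} (hB : ∀ ω, |ζ ω| ≤ B)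
    {x : ℝ} (hx : essSup ζ μ ≤ x) : cptE μ v wm wp (fun ω => ζ ω - x) ≤ 0 :=
  cptE_nonpos_of_ae_nonpos hwm hwp <| (ae_le_essSup_of_abs_le hB).mono fun _ h =>
    hv0 ▸ hv (by linarith)

lemma gsr_le_of_cptE_sub_nonpos {x : ℝ} (hx : cptE μ v wm wp (fun ω => ζ ω - x) ≤ 0) :
    gsr μ v wm wp ζ ≤ x :=
  sInf_le ⟨x, hx, rfl⟩

lemma gsr_eq_of_cptE_sub_eq {c : ℝ} (h : ∀ x, cptE μ v wm wp (fun ω => ζ ω - x) = c - x) :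
    gsr μ v wm wp ζ = c := by
  have hset : {x | cptE μ v wm wp (fun ω => ζ ω - x) ≤ 0} = Ici c := by
    ext x
    simp [h]
  rw [gsr, hset, IsLeast.csInf_eq (EReal.coe_strictMono.monotone.map_isLeast isLeast_Ici)]

end CPT

section Weights

lemma convexOn_indicator_Ici (b : ℝ) : ConvexOn ℝ (Iic b) ((Ici b).indicator (1 : ℝ → ℝ)) := by
  refine convexOn_iff_forall_pos.2 ⟨convex_Iic b, fun x hx y hy a c ha hc hac => ?_⟩
  have hx' : a * x ≤ a * b := mul_le_mul_of_nonneg_left hx ha.le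
  have hy' : c * y ≤ c * b := mul_le_mul_of_nonneg_left hy hc.le
  have hb : a * b + c * b = b := by rw [← add_mul, hac, one_mul]
  simp only [smul_eq_mul, indicator_apply, mem_Ici, Pi.one_apply]
  split_ifs <;> nlinarith

lemma concaveOn_indicator_Ioi (b : ℝ) : ConcaveOn ℝ (Ici b) ((Ioi b).indicator (1 : ℝ → ℝ)) := by
  refine concaveOn_iff_forall_pos.2 ⟨convex_Ici b, fun x hx y hy a c ha hc hac => ?_⟩
  have hx' : a * b ≤ a * x := mul_le_mul_of_nonneg_left hx ha.le
  have hy' : c * b ≤ c * y := mul_le_mul_of_nonneg_left hy hc.le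
  have hb : a * b + c * b = b := by rw [← add_mul, hac, one_mul]
  simp only [smul_eq_mul, indicator_apply, mem_Ioi, Pi.one_apply]
  split_ifs <;> nlinarith

lemma isWeightFun_of_strictMonoOn {w : ℝ → ℝ} (hw : StrictMonoOn w (Icc 0 1)) (h0 : w 0 = 0)
    (h1 : w 1 = 1) : IsWeightFun w :=
  ⟨hw, by simpa only [h0, h1] using hw.monotoneOn.mapsTo_Icc, h0, h1⟩

def jumpWeightAtOne (ε p : ℝ) : ℝ := ε * p + (1 - ε) * (Ici (1:ℝ)).indicator 1 p

def jumpWeightAtZero (ε p : ℝ) : ℝ := ε * p + (1 - ε) * (Ioi (0:ℝ)).indicator 1 p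

variable {ε : ℝ}

lemma isWeightFun_jumpWeightAtOne (hε₀ : 0 < ε) (hε₁ : ε ≤ 1) :
    IsWeightFun (jumpWeightAtOne ε) :=
  isWeightFun_of_strictMonoOn (((strictMono_mul_left_of_pos hε₀).add_monotone
    ((isUpperSet_Ici 1).monotone_indicator_one.const_mul (sub_nonneg.2 hε₁))).strictMonoOn _)
    (by simp [jumpWeightAtOne]) (by simp [jumpWeightAtOne])

lemma isWeightFun_jumpWeightAtZero (hε₀ : 0 < ε) (hε₁ : ε ≤ 1) :
    IsWeightFun (jumpWeightAtZero ε) :=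
  isWeightFun_of_strictMonoOn (((strictMono_mul_left_of_pos hε₀).add_monotone
    ((isUpperSet_Ioi 0).monotone_indicator_one.const_mul (sub_nonneg.2 hε₁))).strictMonoOn _)
    (by simp [jumpWeightAtZero]) (by simp [jumpWeightAtZero])

lemma convexOn_jumpWeightAtOne (hε₀ : 0 ≤ ε) (hε₁ : ε ≤ 1) :
    ConvexOn ℝ (Icc 0 1) (jumpWeightAtOne ε) :=
  ((convexOn_id (convex_Icc 0 1)).smul hε₀).add
    (((convexOn_indicator_Ici 1).subset Icc_subset_Iic_self (convex_Icc 0 1)).smul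
      (sub_nonneg.2 hε₁))

lemma concaveOn_jumpWeightAtZero (hε₀ : 0 ≤ ε) (hε₁ : ε ≤ 1) :
    ConcaveOn ℝ (Icc 0 1) (jumpWeightAtZero ε) :=
  ((concaveOn_id (convex_Icc 0 1)).smul hε₀).add
    (((concaveOn_indicator_Ioi 0).subset Icc_subset_Ici_self (convex_Icc 0 1)).smul
      (sub_nonneg.2 hε₁))

end Weights

section BoundedRV

variable {Ω : Type*} [MeasurableSpace Ω] {ξ η : Ω → ℝ}

lemma IsBddRV.integrable (hξ : IsBddRV ξ) (μ : Measure Ω) [IsFiniteMeasure μ] :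
    Integrable ξ μ :=
  let ⟨hm, B, hB⟩ := hξ
  Integrable.of_bound hm.aestronglyMeasurable B (ae_of_all _ hB)

lemma IsBddRV.add (hξ : IsBddRV ξ) (hη : IsBddRV η) : IsBddRV (fun ω => ξ ω + η ω) :=
  let ⟨hξm, B, hB⟩ := hξ
  let ⟨hηm, C, hC⟩ := hη
  ⟨hξm.add hηm, B + C, fun ω => (abs_add_le _ _).trans (add_le_add (hB ω) (hC ω))⟩

lemma IsBddRV.add_const (hξ : IsBddRV ξ) (c : ℝ) : IsBddRV (fun ω => ξ ω + c) :=
  hξ.add (η := fun _ => c) ⟨measurable_const, |c|, fun _ => le_rfl⟩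

lemma IsBddRV.const_mul (hξ : IsBddRV ξ) (l : ℝ) : IsBddRV (fun ω => l * ξ ω) :=
  let ⟨hm, B, hB⟩ := hξ
  ⟨hm.const_mul l, |l| * B, fun ω => by
    rw [abs_mul]
    exact mul_le_mul_of_nonneg_left (hB ω) (abs_nonneg l)⟩

end BoundedRV

section JumpWeightsGSR

variable {Ω : Type*} [MeasurableSpace Ω] {P : Measure Ω} [IsProbabilityMeasure P] {ζ : Ω → ℝ}

lemma cptE_jumpWeights_sub (hζ : IsBddRV ζ) (ε x : ℝ) :
    cptE P id (jumpWeightAtOne ε) (jumpWeightAtZero ε) (fun ω => ζ ω - x)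
      = ε * ∫ ω, ζ ω ∂P + (1 - ε) * essSup ζ P - x := by
  obtain ⟨hm, B, hB⟩ := hζ
  have hB' : ∀ ω, |ζ ω - x| ≤ B + |x| := fun ω => (abs_sub _ _).trans (by linarith [hB ω])
  have hmean : ∫ ω, ζ ω - x ∂P = ∫ ω, ζ ω ∂P - x := by
    rw [integral_sub (IsBddRV.integrable ⟨hm, B, hB⟩ P) (integrable_const x), integral_const,
      probReal_univ, one_smul]
  have hsup : essSup (fun ω => ζ ω - x) P = essSup ζ P - x := by
    simpa only [← sub_eq_add_neg] using essSup_add_const_of_abs_le (μ := P) hB (-x)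
  calc cptE P id (jumpWeightAtOne ε) (jumpWeightAtZero ε) (fun ω => ζ ω - x)
      = ε * cptE P id id id (fun ω => ζ ω - x)
          + (1 - ε) * cptE P id ((Ici 1).indicator 1) ((Ioi 0).indicator 1) (fun ω => ζ ω - x) :=
        cptE_mul_add_mul_weights (cptWellDef_of_abs_le monotone_id monotone_id rfl rfl hB')
          (cptWellDef_of_abs_le (isUpperSet_Ici 1).monotone_indicator_one
            (isUpperSet_Ioi 0).monotone_indicator_one (by simp) (by simp) hB') ε (1 - ε)
    _ = ε * (∫ ω, ζ ω ∂P - x) + (1 - ε) * (essSup ζ P - x) := by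
        rw [cptE_id_weights (IsBddRV.integrable ⟨hm.sub_const x, _, hB'⟩ P),
          cptE_indicator_weights (hm.sub_const x) hB', hmean, hsup]
    _ = _ := by ring

lemma gsr_jumpWeights (hζ : IsBddRV ζ) (ε : ℝ) :
    gsr P id (jumpWeightAtOne ε) (jumpWeightAtZero ε) ζ
      = ((ε * ∫ ω, ζ ω ∂P + (1 - ε) * essSup ζ P : ℝ) : EReal) :=
  gsr_eq_of_cptE_sub_eq (cptE_jumpWeights_sub hζ ε)

lemma isCoherentRM_gsr_jumpWeights {ε : ℝ} (hε₀ : 0 ≤ ε) (hε₁ : ε ≤ 1) :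
    IsCoherentRM (gsr P id (jumpWeightAtOne ε) (jumpWeightAtZero ε)) := by
  have hε₁' : 0 ≤ 1 - ε := sub_nonneg.2 hε₁
  refine ⟨fun ξ η hξ hη hle => ?_, fun ξ hξ c => ?_, fun ξ η hξ hη => ?_, fun ξ hξ l hl => ?_⟩
  · rw [gsr_jumpWeights hξ, gsr_jumpWeights hη, EReal.coe_le_coe_iff]
    have hmean := integral_mono (hξ.integrable P) (hη.integrable P) hle
    have ⟨_, B, hB⟩ := hξ
    have ⟨_, C, hC⟩ := hη
    have hsup := essSup_mono_of_abs_le (μ := P) hB hC hle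
    gcongr
  · have ⟨_, B, hB⟩ := hξ
    rw [gsr_jumpWeights hξ, gsr_jumpWeights (hξ.add_const c), ← EReal.coe_add,
      integral_add (hξ.integrable P) (integrable_const c), integral_const, probReal_univ,
      one_smul, essSup_add_const_of_abs_le hB]
    ring_nf
  · rw [gsr_jumpWeights hξ, gsr_jumpWeights hη, gsr_jumpWeights (hξ.add hη), ← EReal.coe_add,
      EReal.coe_le_coe_iff, integral_add (hξ.integrable P) (hη.integrable P)]
    have ⟨_, B, hB⟩ := hξ
    have ⟨_, C, hC⟩ := hη
    have hsup := essSup_add_le_of_abs_le (μ := P) hB hC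
    nlinarith
  · have ⟨_, B, hB⟩ := hξ
    rw [gsr_jumpWeights hξ, gsr_jumpWeights (hξ.const_mul l), ← EReal.coe_mul,
      integral_const_mul, essSup_const_mul_of_abs_le hB hl]
    ring_nf

end JumpWeightsGSR

lemma isValueFun_of_mem_cohValueFuns {v : ℝ → ℝ} (hv : v ∈ cohValueFuns) : IsValueFun v := by
  obtain ⟨a₁, a₂, ha₁, ha₂, hpos, hneg⟩ := hv
  refine ⟨fun x y hxy => ?_, by rw [hpos 0 le_rfl, mul_zero]⟩
  rcases lt_or_ge x 0 with hx | hx <;> rcases lt_or_ge y 0 with hy | hy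
  · rw [hneg x hx, hneg y hy]
    exact mul_lt_mul_of_pos_left hxy ha₂
  · rw [hneg x hx, hpos y hy]
    exact (mul_neg_of_pos_of_neg ha₂ hx).trans_le (mul_nonneg ha₁.le hy)
  · exact absurd (hx.trans_lt (hxy.trans hy)) (lt_irrefl 0)
  · rw [hpos x hx, hpos y hy]
    exact mul_lt_mul_of_pos_left hxy ha₁

lemma tendsto_mul_add_one_sub_mul_nhdsGT (a b : ℝ) :
    Tendsto (fun ε : ℝ => ε * a + (1 - ε) * b) (𝓝[>] 0) (𝓝 b) := by
  have : Continuous (fun ε : ℝ => ε * a + (1 - ε) * b) := by fun_prop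
  simpa using (this.tendsto 0).mono_left nhdsWithin_le_nhds

/-- the robust shortfall risk over
`𝒱_coh × 𝒲₁ × 𝒲₂` (with `𝒲₁` the convex and `𝒲₂` the concave weighting
functions) equals the supremum of the GSR-CPT over all tuples inducing a
coherent risk measure. -/
theorem prgsr_coherent {Ω : Type*} [MeasurableSpace Ω] (P : Measure Ω)
    [IsProbabilityMeasure P]
    (ξ : Ω → ℝ) (hξ : IsBddRV ξ) :
    sInf ((fun x : ℝ => (x : EReal)) ''
        {x : ℝ | ∀ vw : (ℝ → ℝ) × (ℝ → ℝ) × (ℝ → ℝ),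
          vw.1 ∈ cohValueFuns →
          (IsWeightFun vw.2.1 ∧ ConvexOn ℝ (Icc 0 1) vw.2.1) →
          (IsWeightFun vw.2.2 ∧ ConcaveOn ℝ (Icc 0 1) vw.2.2) →
          cptE P vw.1 vw.2.1 vw.2.2 (fun ω => ξ ω - x) ≤ 0})
      = ⨆ vw ∈ {vw : (ℝ → ℝ) × (ℝ → ℝ) × (ℝ → ℝ) |
            IsValueFun vw.1 ∧ IsWeightFun vw.2.1 ∧ IsWeightFun vw.2.2 ∧
            IsCoherentRM (fun ζ : Ω → ℝ => gsr P vw.1 vw.2.1 vw.2.2 ζ)},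
          gsr P vw.1 vw.2.1 vw.2.2 ξ := by
  set M := essSup ξ P
  have ⟨_, B, hB⟩ := hξ
  have hsmall : ∀ᶠ ε in 𝓝[>] (0:ℝ), ε ∈ Ioc (0:ℝ) 1 := Ioc_mem_nhdsGT one_pos
  have hlim := tendsto_mul_add_one_sub_mul_nhdsGT (∫ ω, ξ ω ∂P) M
  calc _ = (M : EReal) := by
        refine IsLeast.csInf_eq ⟨⟨M, fun vw hv hwm hwp => ?_, rfl⟩, ?_⟩
        · have hv := isValueFun_of_mem_cohValueFuns hv
          exact cptE_sub_nonpos_of_essSup_le hv.1.monotone hv.2 hwm.1.2.1 hwp.1.2.2.1 hB le_rfl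
        rintro _ ⟨x, hx, rfl⟩
        refine EReal.coe_le_coe_iff.2 (le_of_tendsto hlim (hsmall.mono fun ε hε => ?_))
        have := hx (id, jumpWeightAtOne ε, jumpWeightAtZero ε)
          ⟨1, 1, one_pos, one_pos, fun y _ => (one_mul y).symm, fun y _ => (one_mul y).symm⟩
          ⟨isWeightFun_jumpWeightAtOne hε.1 hε.2, convexOn_jumpWeightAtOne hε.1.le hε.2⟩
          ⟨isWeightFun_jumpWeightAtZero hε.1 hε.2, concaveOn_jumpWeightAtZero hε.1.le hε.2⟩
        rwa [cptE_jumpWeights_sub hξ, sub_nonpos] at this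
    _ = _ := by
        refine le_antisymm (le_of_tendsto ((continuous_coe_real_ereal.tendsto M).comp hlim)
          (hsmall.mono fun ε hε => le_iSup₂_of_le (id, jumpWeightAtOne ε, jumpWeightAtZero ε)
            ⟨⟨strictMono_id, rfl⟩, isWeightFun_jumpWeightAtOne hε.1 hε.2,
              isWeightFun_jumpWeightAtZero hε.1 hε.2,
              isCoherentRM_gsr_jumpWeights hε.1.le hε.2⟩ (gsr_jumpWeights hξ ε).ge))
          (iSup₂_le fun vw ⟨hv, hwm, hwp, _⟩ => gsr_le_of_cptE_sub_nonpos
            (cptE_sub_nonpos_of_essSup_le hv.1.monotone hv.2 hwm.2.1 hwp.2.2.1 hB le_rfl))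
end
end

section
/- For every value function v and weighting functions w⁻, w⁺, the GSR-CPT ρ_{(v,w⁻,w⁺)} is a monetary risk measure on bounded random variables: it is translation invariant, i.e. ρ_{(v,w⁻,w⁺)}(ξ + c) = ρ_{(v,w⁻,w⁺)}(ξ) + c for every bounded random variable ξ and every c ∈ ℝ, and monotone, i.e. if η(ω) ≤ ξ(ω) for every ω ∈ Ω then ρ_{(v,w⁻,w⁺)}(η) ≤ ρ_{(v,w⁻,w⁺)}(ξ). -/
open MeasureTheory Set

noncomputable section

/-!
Translation invariance is the change of variables `x ↦ x + c` in the set of acceptable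
shifts, together with the fact that adding a real constant is an order automorphism of `EReal`.
For monotonicity, a pointwise larger position has larger upper level sets of `v (ξ - x)` and
smaller lower ones, so both distorted integrals move the right way. Boundedness is what makes
these Bochner integrals genuine (rather than the junk value `0`): the integrands are antitone
and vanish beyond the range of `v (ξ - x)`.
-/

lemma EReal.sInf_image_add_coe (s : Set EReal) (c : ℝ) :
    sInf ((· + (c : EReal)) '' s) = sInf s + c :=
  let e : EReal ≃o EReal :=
    ⟨⟨(· + (c : EReal)), (· - (c : EReal)), fun _ => EReal.add_sub_cancel_right,
      fun _ => EReal.sub_add_cancel⟩, (EReal.addLECancellable_coe c).add_le_add_iff_right⟩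
  (map_sInf e s).symm

lemma Antitone.integrableOn_Ioi_of_eq_zero {g : ℝ → ℝ} (hg : Antitone g) (a : ℝ) {B : ℝ}
    (hB : ∀ t, B < t → g t = 0) : IntegrableOn g (Ioi a) := by
  have hzero : IntegrableOn g (Ioi B) :=
    integrableOn_zero.congr_fun (fun t ht => (hB t ht).symm) measurableSet_Ioi
  have hcompact : IntegrableOn g (Icc a B) :=
    (hg.antitoneOn _).integrableOn_isCompact isCompact_Icc
  refine (hcompact.union hzero).mono_set ?_
  intro t (ht : a < t)
  rcases le_or_gt t B with h | h
  exacts [Or.inl ⟨ht.le, h⟩, Or.inr h]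

namespace IsWeightFun

variable {Ω : Type*} [MeasurableSpace Ω] {P : Measure Ω} [IsProbabilityMeasure P]
  {w : ℝ → ℝ}

lemma nonneg (hw : IsWeightFun w) {p : ℝ} (hp : p ∈ Icc (0 : ℝ) 1) : 0 ≤ w p :=
  (hw.2.1 hp).1

lemma prob_mono (hw : IsWeightFun w) {s t : Set Ω} (hst : s ⊆ t) :
    w (P s).toReal ≤ w (P t).toReal :=
  hw.1.monotoneOn ⟨measureReal_nonneg, measureReal_le_one⟩
    ⟨measureReal_nonneg, measureReal_le_one⟩ (measureReal_mono hst)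

lemma antitone_prob_le (hw : IsWeightFun w) (f : Ω → ℝ) :
    Antitone fun t => w (P {ω | t ≤ f ω}).toReal :=
  fun _ _ hts => hw.prob_mono fun _ hω => hts.trans hω

lemma integrableOn_prob_le (hw : IsWeightFun w) {f : Ω → ℝ} (hf : BddAbove (range f)) :
    IntegrableOn (fun t => w (P {ω | t ≤ f ω}).toReal) (Ioi 0) := by
  obtain ⟨B, hB⟩ := hf
  refine (hw.antitone_prob_le f).integrableOn_Ioi_of_eq_zero 0 (B := B) fun t ht => ?_
  have hempty : {ω | t ≤ f ω} = ∅ :=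
    eq_empty_of_forall_notMem fun ω hω => (hB (mem_range_self ω)).not_gt (ht.trans_le hω)
  simp [hempty, hw.2.2.1]

lemma integral_prob_le_mono (hw : IsWeightFun w) {f g : Ω → ℝ} (hfg : ∀ ω, f ω ≤ g ω)
    (hg : IntegrableOn (fun t => w (P {ω | t ≤ g ω}).toReal) (Ioi 0)) :
    ∫ t in Ioi 0, w (P {ω | t ≤ f ω}).toReal ≤ ∫ t in Ioi 0, w (P {ω | t ≤ g ω}).toReal :=
  integral_mono_of_nonneg (.of_forall fun _ => hw.nonneg ⟨measureReal_nonneg, measureReal_le_one⟩)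
    hg (.of_forall fun _ => hw.prob_mono fun _ hω => hω.trans (hfg _))

end IsWeightFun

section gsr

variable {Ω : Type*} [MeasurableSpace Ω] {P : Measure Ω} {v wm wp : ℝ → ℝ}

lemma gsr_add_const (ξ : Ω → ℝ) (c : ℝ) :
    gsr P v wm wp (fun ω => ξ ω + c) = gsr P v wm wp ξ + c := by
  have hshift : {x : ℝ | cptE P v wm wp (fun ω => ξ ω + c - x) ≤ 0} =
      (· + c) '' {x | cptE P v wm wp (fun ω => ξ ω - x) ≤ 0} := by
    rw [image_add_right]
    ext x
    simp only [mem_ofPred_eq, mem_preimage, sub_add_eq_sub_sub, sub_neg_eq_add, add_sub_right_comm]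
  rw [gsr, gsr, hshift, image_image, ← EReal.sInf_image_add_coe, image_image]
  simp only [EReal.coe_add]

lemma cptE_eq_sub (ζ : Ω → ℝ) :
    cptE P v wm wp ζ = (∫ t in Ioi 0, wp (P {ω | t ≤ v (ζ ω)}).toReal) -
      ∫ t in Ioi 0, wm (P {ω | t ≤ -v (ζ ω)}).toReal := by
  rw [cptE]
  congr! 5 with t
  exact congrArg P (ext fun _ => le_neg (α := ℝ))

variable [IsProbabilityMeasure P]

lemma cptE_mono_s6 (hv : Monotone v) (hwm : IsWeightFun wm) (hwp : IsWeightFun wp)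
    {ζ₁ ζ₂ : Ω → ℝ} (hle : ∀ ω, ζ₁ ω ≤ ζ₂ ω)
    (hp : IntegrableOn (fun t => wp (P {ω | t ≤ v (ζ₂ ω)}).toReal) (Ioi 0))
    (hm : IntegrableOn (fun t => wm (P {ω | t ≤ -v (ζ₁ ω)}).toReal) (Ioi 0)) :
    cptE P v wm wp ζ₁ ≤ cptE P v wm wp ζ₂ := by
  rw [cptE_eq_sub, cptE_eq_sub]
  gcongr ?_ - ?_
  · exact hwp.integral_prob_le_mono (fun ω => hv (hle ω)) hp
  · exact hwm.integral_prob_le_mono (fun ω => neg_le_neg (hv (hle ω))) hm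

lemma gsr_mono (hv : Monotone v) (hwm : IsWeightFun wm) (hwp : IsWeightFun wp)
    {η ξ : Ω → ℝ} (hη : BddBelow (range η)) (hξ : BddAbove (range ξ)) (hle : ∀ ω, η ω ≤ ξ ω) :
    gsr P v wm wp η ≤ gsr P v wm wp ξ := by
  obtain ⟨A, hA⟩ := hη
  obtain ⟨B, hB⟩ := hξ
  refine sInf_le_sInf (image_mono fun x (hx : cptE _ _ _ _ _ ≤ 0) => ?_)
  refine le_trans (cptE_mono_s6 hv hwm hwp (fun ω => sub_le_sub_right (hle ω) x) ?_ ?_) hx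
  · refine hwp.integrableOn_prob_le ⟨v (B - x), forall_mem_range.2 fun ω => ?_⟩
    exact hv (sub_le_sub_right (hB (mem_range_self ω)) x)
  · refine hwm.integrableOn_prob_le ⟨-v (A - x), forall_mem_range.2 fun ω => ?_⟩
    exact neg_le_neg (hv (sub_le_sub_right (hA (mem_range_self ω)) x))

end gsr

lemma IsBddRV.bddAbove_range {Ω : Type*} [MeasurableSpace Ω] {ξ : Ω → ℝ} (h : IsBddRV ξ) :
    BddAbove (range ξ) :=
  let ⟨_, M, hM⟩ := h
  ⟨M, forall_mem_range.2 fun ω => (le_abs_self _).trans (hM ω)⟩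

lemma IsBddRV.bddBelow_range {Ω : Type*} [MeasurableSpace Ω] {ξ : Ω → ℝ} (h : IsBddRV ξ) :
    BddBelow (range ξ) :=
  let ⟨_, M, hM⟩ := h
  ⟨-M, forall_mem_range.2 fun ω => neg_le_of_abs_le (hM ω)⟩

/-- the GSR-CPT is a monetary risk measure on bounded random
variables: it is translation invariant and monotone. -/
theorem gsr_monetary {Ω : Type*} [MeasurableSpace Ω] (P : Measure Ω)
    [IsProbabilityMeasure P]
    (v wm wp : ℝ → ℝ) (hv : IsValueFun v) (hwm : IsWeightFun wm)
    (hwp : IsWeightFun wp) :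
    (∀ ξ : Ω → ℝ, IsBddRV ξ → ∀ c : ℝ,
        gsr P v wm wp (fun ω => ξ ω + c) = gsr P v wm wp ξ + (c : EReal)) ∧
    (∀ η ξ : Ω → ℝ, IsBddRV η → IsBddRV ξ → (∀ ω, η ω ≤ ξ ω) →
        gsr P v wm wp η ≤ gsr P v wm wp ξ) :=
  ⟨fun ξ _ c => gsr_add_const ξ c, fun _ _ hη hξ hle =>
    gsr_mono hv.1.monotone hwm hwp hη.bddBelow_range hξ.bddAbove_range hle⟩
end
end
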